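/- arXiv:math/0508162 — 8 statements merged into one kernel-verified Lean document; each statement's English description precedes it below -/
import Mathlib

section
/- The number of directed trees on a finite set $I$ (directed graphs with no loops or cycles, exactly one vertex of out-degree 0, all others of out-degree 1) is $|I|^{|I|-1}$. -/
/-- A directed tree on a set `I`, encoded by the map `p` sending each vertex to the
endpoint of its unique outgoing edge; the root `r` (the unique vertex of out-degree `0`)
is sent to itself, and every vertex reaches the root by iterating `p`
(which encodes the absence of loops and cycles). -/
def IsTreeFn {I : Type*} (p : I → I) : Prop :=
  ∃ r : I, p r = r ∧ ∀ i : I, ∃ k : ℕ, p^[k] i = r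

/-!
Joyal's bijection. An endofunction `f` of `I` is the same as a set `S` (its periodic points), a
permutation of `S` (the restriction of `f`) and a forest rooted in `S` (make every point of `S` a
root). A tree with a marked vertex `v` is the same as a set `S` (the path from `v` to the root), a
linear ordering of `S` (along that path) and a forest rooted in `S` (cut the path's edges). As `S`
has as many permutations as linear orderings, `|I| * #trees = |I| ^ |I|`.
-/

open Function Set

section

variable {I : Type*}

theorem exists_iterate_mem_of_eqOn_compl {S : Set I} {f g : I → I} (hfg : EqOn f g Sᶜ)
    {x : I} (hx : ∃ k, f^[k] x ∈ S) : ∃ k, g^[k] x ∈ S := by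
  obtain ⟨k, hk⟩ := hx
  induction k generalizing x with
  | zero => exact ⟨0, hk⟩
  | succ k ih =>
    by_cases hxS : x ∈ S
    · exact ⟨0, hxS⟩
    · rw [iterate_succ_apply, hfg hxS] at hk
      obtain ⟨m, hm⟩ := ih hk
      exact ⟨m + 1, hm⟩

theorem periodicPts_subset_of_mapsTo {S : Set I} {f : I → I} (hS : MapsTo f S S)
    (hreach : ∀ x, ∃ k, f^[k] x ∈ S) : periodicPts f ⊆ S := by
  intro x hx
  obtain ⟨n, hn, hper⟩ := mem_periodicPts.mp hx
  obtain ⟨k, hk⟩ := hreach x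
  have hkn : n * k - k + k = n * k := Nat.sub_add_cancel (Nat.le_mul_of_pos_left k hn)
  rw [← (hper.mul_const k).eq, ← hkn, iterate_add_apply]
  exact hS.iterate _ hk

theorem exists_iterate_mem_periodicPts [Finite I] (f : I → I) (x : I) :
    ∃ k, f^[k] x ∈ periodicPts f := by
  obtain ⟨i, j, hne, hij⟩ := Finite.exists_ne_map_eq_of_infinite (fun k : ℕ => f^[k] x)
  wlog hlt : i < j generalizing i j
  · exact this j i hne.symm hij.symm (by omega)
  refine ⟨i, mk_mem_periodicPts (Nat.sub_pos_of_lt hlt) ?_⟩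
  change f^[j - i] (f^[i] x) = f^[i] x
  rw [← iterate_add_apply, Nat.sub_add_cancel hlt.le]
  exact hij.symm

theorem injOn_iterate_Iic {f : I → I} {x : I} {m : ℕ} (hm : ∀ k < m, f^[k] x ≠ f^[m] x) :
    InjOn (fun k => f^[k] x) (Iic m) := by
  intro i hi j hj hij
  rw [mem_Iic] at hi hj
  wlog hlt : i < j generalizing i j
  · obtain rfl | hgt := (not_lt.mp hlt).eq_or_lt
    · rfl
    · exact (this hj hi hij.symm hgt).symm
  refine absurd ?_ (hm (m - j + i) (by omega))
  simp only at hij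
  rw [iterate_add_apply, hij, ← iterate_add_apply, Nat.sub_add_cancel hj]

def IsForestRootedAt (S : Set I) (p : I → I) : Prop :=
  (∀ s ∈ S, p s = s) ∧ ∀ x, ∃ k, p^[k] x ∈ S

theorem isForestRootedAt_piecewise {S : Set I} [DecidablePred (· ∈ S)] {f : I → I}
    (hf : ∀ x, ∃ k, f^[k] x ∈ S) : IsForestRootedAt S (S.piecewise id f) :=
  ⟨fun _ hs => piecewise_eq_of_mem _ _ _ hs, fun x =>
    exists_iterate_mem_of_eqOn_compl (fun _ hy => (piecewise_eq_of_notMem _ _ _ hy).symm) (hf x)⟩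

theorem IsForestRootedAt.card_pos [Finite I] [Nonempty I] {S : Set I} {p : I → I}
    (hp : IsForestRootedAt S p) : 0 < Nat.card S := by
  obtain ⟨k, hk⟩ := hp.2 (Classical.arbitrary I)
  have : Nonempty S := ⟨⟨_, hk⟩⟩
  exact Nat.card_pos

section Glue

variable {S : Set I} {g g' : S → S} {p p' : I → I}

open scoped Classical in
noncomputable def glue (S : Set I) (g : S → S) (p : I → I) : I → I :=
  fun x => if hx : x ∈ S then g ⟨x, hx⟩ else p x

theorem glue_coe (y : S) : glue S g p y = g y := dif_pos y.2

theorem eqOn_glue_compl : EqOn (glue S g p) p Sᶜ := fun _ hx => dif_neg hx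

theorem semiconj_glue : Semiconj (↑) g (glue S g p) := fun y => (glue_coe y).symm

theorem mapsTo_glue : MapsTo (glue S g p) S S := fun x hx => by
  rw [← Subtype.coe_mk x hx, glue_coe]; exact Subtype.mem _

theorem iterate_glue_coe (k : ℕ) (y : S) : (glue S g p)^[k] y = ↑(g^[k] y) :=
  ((semiconj_glue.iterate_right k) y).symm

theorem exists_iterate_glue_mem (hp : IsForestRootedAt S p) (x : I) :
    ∃ k, (glue S g p)^[k] x ∈ S :=
  exists_iterate_mem_of_eqOn_compl eqOn_glue_compl.symm (hp.2 x)

theorem eq_and_eq_of_glue_eq (hp : IsForestRootedAt S p) (hp' : IsForestRootedAt S p')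
    (h : glue S g p = glue S g' p') : g = g' ∧ p = p' := by
  refine ⟨funext fun y => Subtype.ext ?_, funext fun x => ?_⟩
  · rw [← glue_coe (p := p), ← glue_coe (p := p'), h]
  · by_cases hx : x ∈ S
    · rw [hp.1 x hx, hp'.1 x hx]
    · rw [← eqOn_glue_compl (g := g) (p := p) hx, ← eqOn_glue_compl (g := g') (p := p') hx, h]

theorem periodicPts_glue_perm [Finite I] (σ : Equiv.Perm S) (hp : IsForestRootedAt S p) :
    periodicPts (glue S σ p) = S :=
  (periodicPts_subset_of_mapsTo mapsTo_glue (exists_iterate_glue_mem hp)).antisymm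
    fun y hy => semiconj_glue.mapsTo_periodicPts (σ.injective.mem_periodicPts ⟨y, hy⟩)

end Glue

abbrev PermForest (I : Type*) :=
  Σ S : Set I, Equiv.Perm S × {p : I → I // IsForestRootedAt S p}

noncomputable def PermForest.toFun (x : PermForest I) : I → I := glue x.1 x.2.1 x.2.2

theorem PermForest.toFun_injective [Finite I] : Injective (PermForest.toFun (I := I)) := by
  rintro ⟨S, σ, p, hp⟩ ⟨S', σ', p', hp'⟩ h
  obtain rfl : S = S' := by
    rw [← periodicPts_glue_perm σ hp, ← periodicPts_glue_perm σ' hp']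
    exact congrArg periodicPts h
  obtain ⟨hσ, rfl⟩ := eq_and_eq_of_glue_eq hp hp' h
  obtain rfl : σ = σ' := DFunLike.coe_injective hσ
  rfl

theorem PermForest.toFun_surjective [Finite I] : Surjective (PermForest.toFun (I := I)) := by
  classical
  intro f
  refine ⟨⟨periodicPts f, (bijOn_periodicPts f).equiv,
    (periodicPts f).piecewise id f, isForestRootedAt_piecewise (exists_iterate_mem_periodicPts f)⟩,
    funext fun x => ?_⟩
  by_cases hx : x ∈ periodicPts f
  · exact glue_coe ⟨x, hx⟩
  · exact (eqOn_glue_compl hx).trans (piecewise_eq_of_notMem _ _ _ hx)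

theorem PermForest.toFun_bijective [Finite I] : Bijective (PermForest.toFun (I := I)) :=
  ⟨toFun_injective, toFun_surjective⟩

-- Truncated subtraction makes `0` the fixed end of the path: the root.
def pathStep (n : ℕ) (i : Fin n) : Fin n := ⟨i - 1, by omega⟩

theorem coe_iterate_pathStep (n k : ℕ) (i : Fin n) : ((pathStep n)^[k] i : ℕ) = i - k := by
  induction k with
  | zero => rfl
  | succ k ih =>
    rw [iterate_succ_apply']
    change ((pathStep n)^[k] i : ℕ) - 1 = i - (k + 1)
    omega

section Path

variable {S : Set I} {n : ℕ}

def pathMap (e : Fin n ≃ S) : S → S := e ∘ pathStep n ∘ e.symm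

theorem iterate_glue_pathMap (e : Fin n ≃ S) (p : I → I) (k : ℕ) (i : Fin n) :
    (glue S (pathMap e) p)^[k] (e i) = e ((pathStep n)^[k] i) := by
  have hconj : Semiconj e (pathStep n) (pathMap e) := fun i => by simp [pathMap]
  rw [iterate_glue_coe, (hconj.iterate_right k) i]

theorem coe_eq_iterate_glue_pathMap (hn : 0 < n) (e : Fin n ≃ S) (p : I → I) (i : Fin n) :
    (e i : I) = (glue S (pathMap e) p)^[n - 1 - i] (e ⟨n - 1, by omega⟩) := by
  rw [iterate_glue_pathMap]
  congr 2
  ext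
  rw [coe_iterate_pathStep]
  dsimp only
  omega

theorem range_iterate_glue_pathMap (hn : 0 < n) (e : Fin n ≃ S) (p : I → I) :
    range (fun k => (glue S (pathMap e) p)^[k] (e ⟨n - 1, by omega⟩)) = S := by
  refine (range_subset_iff.mpr fun k => ?_).antisymm fun x hx => ?_
  · rw [iterate_glue_pathMap]
    exact Subtype.mem _
  · obtain ⟨i, hi⟩ := e.surjective ⟨x, hx⟩
    exact ⟨_, (coe_eq_iterate_glue_pathMap hn e p i).symm.trans (congrArg Subtype.val hi)⟩

theorem isTreeFn_glue_pathMap (hn : 0 < n) (e : Fin n ≃ S) {p : I → I}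
    (hp : IsForestRootedAt S p) : IsTreeFn (glue S (pathMap e) p) := by
  have hroot : ∀ k (i : Fin n), (i : ℕ) ≤ k → (glue S (pathMap e) p)^[k] (e i) = e ⟨0, hn⟩ :=
    fun k i hik => by
      rw [iterate_glue_pathMap]
      congr 2
      ext
      rw [coe_iterate_pathStep]
      dsimp only
      omega
  refine ⟨e ⟨0, hn⟩, hroot 1 _ (Nat.zero_le 1), fun x => ?_⟩
  obtain ⟨k, hk⟩ := exists_iterate_glue_mem (g := pathMap e) hp x
  obtain ⟨i, hi⟩ := e.surjective ⟨_, hk⟩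
  refine ⟨n + k, ?_⟩
  rw [iterate_add_apply, ← Subtype.coe_mk _ hk, ← hi]
  exact hroot n i i.2.le

end Path

abbrev PathForest (I : Type*) :=
  Σ S : Set I, (Fin (Nat.card S) ≃ S) × {p : I → I // IsForestRootedAt S p}

noncomputable def PathForest.toMarkedTree [Finite I] [Nonempty I] (x : PathForest I) :
    I × {q : I → I // IsTreeFn q} :=
  (x.2.1 ⟨Nat.card x.1 - 1, Nat.sub_lt x.2.2.2.card_pos one_pos⟩,
    ⟨glue x.1 (pathMap x.2.1) x.2.2, isTreeFn_glue_pathMap x.2.2.2.card_pos x.2.1 x.2.2.2⟩)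

theorem PathForest.toMarkedTree_injective [Finite I] [Nonempty I] :
    Injective (toMarkedTree (I := I)) := by
  rintro ⟨S, e, p, hp⟩ ⟨S', e', p', hp'⟩ h
  simp only [toMarkedTree, Prod.mk.injEq, Subtype.mk.injEq] at h
  obtain ⟨hv, hq⟩ := h
  obtain rfl : S = S' := by
    rw [← range_iterate_glue_pathMap hp.card_pos e p,
      ← range_iterate_glue_pathMap hp'.card_pos e' p', hq, hv]
  obtain rfl : e = e' := Equiv.ext fun i => Subtype.ext <| by
    rw [coe_eq_iterate_glue_pathMap hp.card_pos e p, coe_eq_iterate_glue_pathMap hp.card_pos e' p',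
      hq, hv]
  obtain ⟨-, rfl⟩ := eq_and_eq_of_glue_eq hp hp' hq
  rfl

theorem PathForest.toMarkedTree_surjective [Finite I] [Nonempty I] :
    Surjective (toMarkedTree (I := I)) := by
  classical
  rintro ⟨v, q, r, hr, hreach⟩
  let m := Nat.find (hreach v)
  have hm : q^[m] v = r := Nat.find_spec (hreach v)
  -- the path from `v` to the root `r`, listed from `r`
  let f : Fin (m + 1) → I := fun j => q^[m - j] v
  have hf : Injective f := fun i j hij => by
    have := injOn_iterate_Iic (fun k hk => hm ▸ Nat.find_min (hreach v) hk)
      (mem_Iic.mpr (Nat.sub_le m i)) (mem_Iic.mpr (Nat.sub_le m j)) hij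
    omega
  let S := range f
  have hcard : Nat.card S = m + 1 := by rw [Nat.card_range_of_injective hf, Nat.card_fin]
  let e : Fin (Nat.card S) ≃ S := (finCongr hcard).trans (Equiv.ofInjective f hf)
  have he : ∀ i, (e i : I) = q^[m - i] v := fun i => rfl
  have hreachS : ∀ x, ∃ k, q^[k] x ∈ S := fun x =>
    let ⟨k, hk⟩ := hreach x
    ⟨k, ⟨0, by simp [f, hk, hm]⟩⟩
  refine ⟨⟨S, e, S.piecewise id q, isForestRootedAt_piecewise hreachS⟩, Prod.ext ?_ ?_⟩
  · show q^[m - (Nat.card S - 1)] v = v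
    rw [hcard, Nat.add_sub_cancel, Nat.sub_self, iterate_zero_apply]
  · refine Subtype.ext (funext fun x => ?_)
    show glue S (pathMap e) (S.piecewise id q) x = q x
    by_cases hx : x ∈ S
    · obtain ⟨i, rfl⟩ : ∃ i, (e i : I) = x := ⟨e.symm ⟨x, hx⟩, by rw [Equiv.apply_symm_apply]⟩
      have hstep := iterate_glue_pathMap e (S.piecewise id q) 1 i
      rw [iterate_one, iterate_one] at hstep
      have him : (i : ℕ) ≤ m := by have := i.2; omega
      rw [hstep, he, he]
      change q^[m - (i - 1)] v = q (q^[m - i] v)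
      obtain h0 | hpos := Nat.eq_zero_or_pos i
      · rw [h0, Nat.zero_sub, Nat.sub_zero, hm, hr]
      · rw [← iterate_succ_apply' q]
        congr 1
        omega
    · exact (eqOn_glue_compl hx).trans (piecewise_eq_of_notMem _ _ _ hx)

theorem PathForest.toMarkedTree_bijective [Finite I] [Nonempty I] :
    Bijective (toMarkedTree (I := I)) :=
  ⟨toMarkedTree_injective, toMarkedTree_surjective⟩

noncomputable def permForestEquivPathForest [Finite I] : PermForest I ≃ PathForest I :=
  Equiv.sigmaCongrRight fun S =>
    (Equiv.equivCongr (Finite.equivFin S) (Equiv.refl S)).prodCongr (Equiv.refl _)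

end

/-- The number of directed trees on a nonempty finite set `I` is `|I| ^ (|I| - 1)`. -/
theorem stmt0 (I : Type*) [Fintype I] [Nonempty I] :
    Nat.card {p : I → I // IsTreeFn p} = Fintype.card I ^ (Fintype.card I - 1) := by
  have hcount : Fintype.card I * Nat.card {p : I → I // IsTreeFn p} =
      Fintype.card I ^ Fintype.card I :=
    calc _ = Nat.card (I × {p : I → I // IsTreeFn p}) := by
          rw [Nat.card_prod, Nat.card_eq_fintype_card (α := I)]
      _ = Nat.card (PathForest I) :=
          (Nat.card_congr (.ofBijective _ PathForest.toMarkedTree_bijective)).symm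
      _ = Nat.card (PermForest I) := (Nat.card_congr permForestEquivPathForest).symm
      _ = Nat.card (I → I) := Nat.card_congr (.ofBijective _ PermForest.toFun_bijective)
      _ = _ := by rw [Nat.card_fun, Nat.card_eq_fintype_card]
  have hpos : 0 < Fintype.card I := Fintype.card_pos
  apply Nat.eq_of_mul_eq_mul_left hpos
  rw [hcount, ← pow_succ', Nat.sub_add_cancel hpos]
end

section
/- For each $T \in \mathcal{T}(1,n)$ let $p_T = \prod_{i\to j \text{ in } T}(z_i - z_j) \in \mathbb{C}[z_1,\dots,z_n]$. Then the set $\{1/p_T : T \in \mathcal{T}(1,n)^{\circ}\}$ of rational functions, as $T$ ranges over rectified directed trees on $\{1,\dots,n\}$, is linearly independent over $\mathbb{C}$ in $\mathbb{C}(z_1,\dots,z_n)$. -/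
open MvPolynomial in
/-- `p_T = ∏_{i → j in T} (z_i - z_j)`, the product over the edges of the tree
(the non-root vertices `i`, with `j = p i`). -/
noncomputable def treePoly {n : ℕ} (p : Fin n → Fin n) : MvPolynomial (Fin n) ℂ :=
  ∏ i ∈ Finset.univ.filter (fun i => p i ≠ i), (X i - X (p i))

/-!
For a rectified tree `T`, `p_T` divides `Q = ∏_{i<j} (z_i - z_j)` with cofactor
`c_T = ∏ (z_i - z_j)` over the pairs `i < j` that are not edges of `T`, so `1/p_T = c_T / Q`
and it suffices to show that the polynomials `c_T` are linearly independent.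
We induct on `n`. Given a tree `T₀` with edge `0 → j`, substitute `z_0 := z_j`. Every `c_T` in
which `0 → j` is not an edge contains the factor `z_0 - z_j` and vanishes; for the others,
`c_T` becomes `∏_{m ≠ j} (z_j - z_m)` times the cofactor of the tree with the leaf `0` deleted.
Deleting `0` is injective on the trees with edge `0 → j`, so the induction hypothesis shows that
the coefficient of `T₀` in any vanishing linear combination is zero.
-/

open MvPolynomial Finset Function

theorem LinearIndependent.of_forall_exists_linearIndepOn {ι R M N : Type*} [Ring R]
    [AddCommGroup M] [Module R M] [AddCommGroup N] [Module R N] {v : ι → M}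
    (h : ∀ i, ∃ (f : M →ₗ[R] N) (s : Set ι), i ∈ s ∧ (∀ j ∉ s, f (v j) = 0) ∧
      LinearIndepOn R (f ∘ v) s) :
    LinearIndependent R v := by
  classical
  rw [linearIndependent_iff']
  intro t g hg i hi
  obtain ⟨f, s, his, hvanish, hs⟩ := h i
  have hsum : ∑ j ∈ t with j ∈ s, g j • f (v j) = 0 := by
    rw [sum_filter_of_ne fun j _ hj => by_contra fun hjs => hj (by rw [hvanish j hjs, smul_zero])]
    simp only [← map_smul, ← map_sum, hg, map_zero]
  exact linearIndepOn_iff'.1 hs _ g (fun j hj => (mem_filter.1 hj).2) hsum i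
    (mem_filter.2 ⟨hi, his⟩)

lemma MvPolynomial.X_sub_X_ne_zero {σ R : Type*} [CommRing R] [Nontrivial R] {i j : σ}
    (h : i ≠ j) : (X i - X j : MvPolynomial σ R) ≠ 0 :=
  sub_ne_zero.2 fun hX => h (X_injective hX)

def IsRectified {I : Type*} [Preorder I] (p : I → I) : Prop :=
  ∀ i, p i ≠ i → i < p i

namespace IsRectified

variable {I : Type*} [PartialOrder I] {p : I → I}

lemma le_apply (hp : IsRectified p) (i : I) : i ≤ p i :=
  (eq_or_ne (p i) i).elim (fun h => h.ge) fun h => (hp i h).le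

lemma le_of_apply_eq_self (hp : IsRectified p) (ht : IsTreeFn p) {x : I} (hx : p x = x)
    (y : I) : y ≤ x := by
  obtain ⟨r, -, hreach⟩ := ht
  obtain ⟨k, hk⟩ := hreach x
  obtain ⟨m, hm⟩ := hreach y
  rw [iterate_fixed hx] at hk
  exact hk ▸ hm ▸ id_le_iterate_of_id_le hp.le_apply m y

lemma apply_zero_ne_zero {n : ℕ} {p : Fin (n + 2) → Fin (n + 2)} (hp : IsRectified p)
    (ht : IsTreeFn p) : p 0 ≠ 0 :=
  fun h => absurd (hp.le_of_apply_eq_self ht h 1) (by simp)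

end IsRectified

/-- `Fin.predAbove 0` is a total version of `Fin.pred`. -/
def eraseZero {n : ℕ} (p : Fin (n + 2) → Fin (n + 2)) (i : Fin (n + 1)) : Fin (n + 1) :=
  Fin.predAbove 0 (p i.succ)

section eraseZero

variable {n : ℕ} {p : Fin (n + 2) → Fin (n + 2)}

lemma succ_eraseZero (hp : IsRectified p) (i : Fin (n + 1)) : (eraseZero p i).succ = p i.succ :=
  Fin.succ_predAbove_zero ((Fin.succ_pos i).trans_le (hp.le_apply _)).ne'

lemma isRectified_eraseZero (hp : IsRectified p) : IsRectified (eraseZero p) := by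
  intro i hi
  rw [← Fin.succ_lt_succ_iff, succ_eraseZero hp]
  exact hp _ (by rwa [← succ_eraseZero hp, Ne, Fin.succ_inj])

lemma isTreeFn_eraseZero (hp : IsRectified p) (ht : IsTreeFn p) : IsTreeFn (eraseZero p) := by
  obtain ⟨r, hr, hreach⟩ := ht
  have hr0 : r ≠ 0 := (zero_lt_one.trans_le (hp.le_of_apply_eq_self ⟨r, hr, hreach⟩ hr 1)).ne'
  obtain ⟨r, rfl⟩ := Fin.exists_succ_eq.2 hr0
  refine ⟨r, Fin.succ_injective _ (by rw [succ_eraseZero hp, hr]), fun i => ?_⟩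
  obtain ⟨k, hk⟩ := hreach i.succ
  have hconj : Semiconj Fin.succ (eraseZero p) p := succ_eraseZero hp
  exact ⟨k, Fin.succ_injective _ (by rw [hconj.iterate_right k i, hk])⟩

lemma eq_of_eraseZero_eq {q : Fin (n + 2) → Fin (n + 2)} (hp : IsRectified p)
    (hq : IsRectified q) (h0 : p 0 = q 0) (h : eraseZero p = eraseZero q) : p = q := by
  funext i
  cases i using Fin.cases with
  | zero => exact h0
  | succ i => rw [← succ_eraseZero hp, ← succ_eraseZero hq, h]

end eraseZero

abbrev RectifiedTree (n : ℕ) := {p : Fin n → Fin n // IsTreeFn p ∧ IsRectified p}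

def RectifiedTree.eraseZero {n : ℕ} (T : RectifiedTree (n + 2)) : RectifiedTree (n + 1) :=
  ⟨_root_.eraseZero T.1, isTreeFn_eraseZero T.2.2 T.2.1, isRectified_eraseZero T.2.2⟩

section Polynomials

variable (R : Type*) [CommRing R] {n : ℕ}

noncomputable def vandermondeProd (n : ℕ) : MvPolynomial (Fin n) R :=
  ∏ i, ∏ j with i < j, (X i - X j)

noncomputable def treeCofactor (p : Fin n → Fin n) : MvPolynomial (Fin n) R :=
  ∏ i, ∏ j with i < j ∧ p i ≠ j, (X i - X j)

variable {R}

lemma treeCofactor_ne_zero [IsDomain R] (p : Fin n → Fin n) : treeCofactor R p ≠ 0 :=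
  prod_ne_zero_iff.2 fun _ _ => prod_ne_zero_iff.2 fun _ hj =>
    X_sub_X_ne_zero (mem_filter.1 hj).2.1.ne

-- `Fin.cases a id` substitutes `z_0 := z_{a+1}` and shifts the other variables down by one.

lemma rename_treeCofactor_of_apply_zero_ne {p : Fin (n + 2) → Fin (n + 2)} {a : Fin (n + 1)}
    (h0 : p 0 ≠ a.succ) : rename (Fin.cases a id) (treeCofactor R p) = 0 := by
  rw [treeCofactor, map_prod]
  refine prod_eq_zero (mem_univ 0) ?_
  rw [map_prod]
  refine prod_eq_zero (i := a.succ) (mem_filter.2 ⟨mem_univ _, Fin.succ_pos a, h0⟩) ?_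
  simp

lemma rename_treeCofactor_of_apply_zero_eq {p : Fin (n + 2) → Fin (n + 2)} (hp : IsRectified p)
    {a : Fin (n + 1)} (h0 : p 0 = a.succ) :
    rename (Fin.cases a id) (treeCofactor R p)
      = (∏ b with a ≠ b, (X a - X b)) * treeCofactor R (eraseZero p) := by
  simp only [treeCofactor, prod_filter, Fin.prod_univ_succ (n := n + 1)]
  simp [apply_ite (rename _), h0, ← succ_eraseZero hp, Fin.succ_pos]

lemma prod_edges_eq_ite {p : Fin n → Fin n} (hp : IsRectified p) (i : Fin n) :
    ∏ j with i < j ∧ p i = j, (X i - X j : MvPolynomial (Fin n) R)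
      = if p i ≠ i then X i - X (p i) else 1 := by
  have hedge : ∀ j, (i < j ∧ p i = j) ↔ (p i = j ∧ p i ≠ i) := fun j => by
    constructor
    · rintro ⟨hij, rfl⟩
      exact ⟨rfl, hij.ne'⟩
    · rintro ⟨rfl, h⟩
      exact ⟨hp i h, rfl⟩
  simp_rw [hedge, ← filter_filter, prod_filter, prod_ite_eq, mem_univ, if_true]

lemma treePoly_mul_treeCofactor {p : Fin n → Fin n} (hp : IsRectified p) :
    treePoly p * treeCofactor ℂ p = vandermondeProd ℂ n := by
  rw [treePoly, prod_filter, vandermondeProd, treeCofactor, ← prod_mul_distrib]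
  refine prod_congr rfl fun i _ => ?_
  rw [← prod_edges_eq_ite hp,
    ← prod_filter_mul_prod_filter_not (univ.filter (i < ·)) (p i = ·), filter_filter,
    filter_filter]

lemma vandermondeProd_mul_inv_treePoly {K : Type*} [Field K]
    [Algebra (MvPolynomial (Fin n) ℂ) K] [IsFractionRing (MvPolynomial (Fin n) ℂ) K]
    {p : Fin n → Fin n} (hp : IsRectified p) :
    algebraMap _ K (vandermondeProd ℂ n) * (algebraMap _ K (treePoly p))⁻¹
      = algebraMap _ K (treeCofactor ℂ p) := by
  have hp0 : algebraMap _ K (treePoly p) ≠ 0 :=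
    (map_ne_zero_iff _ (IsFractionRing.injective _ K)).2 <| prod_ne_zero_iff.2 fun _ hi =>
      X_sub_X_ne_zero (mem_filter.1 hi).2.symm
  rw [← treePoly_mul_treeCofactor hp, map_mul, mul_comm, inv_mul_cancel_left₀ hp0]

end Polynomials

section Independence

variable {R : Type*} [CommRing R] [IsDomain R]

lemma linearIndependent_treeCofactor_of_subsingleton {n : ℕ} [Subsingleton (Fin n → Fin n)] :
    LinearIndependent R fun T : RectifiedTree n => treeCofactor R T.1 :=
  (linearIndependent_subsingleton_index_iff _).2 fun T => treeCofactor_ne_zero T.1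

lemma linearIndependent_treeCofactor_succ_succ {n : ℕ}
    (ih : LinearIndependent R fun T : RectifiedTree (n + 1) => treeCofactor R T.1) :
    LinearIndependent R fun T : RectifiedTree (n + 2) => treeCofactor R T.1 := by
  refine .of_forall_exists_linearIndepOn (N := MvPolynomial (Fin (n + 1)) R) fun T₀ => ?_
  obtain ⟨a, ha⟩ := Fin.exists_succ_eq.2 (T₀.2.2.apply_zero_ne_zero T₀.2.1)
  refine ⟨(rename (Fin.cases a id)).toLinearMap, {T | T.1 0 = a.succ}, ha.symm, ?_, ?_⟩
  · intro T hT
    rw [AlgHom.toLinearMap_apply]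
    exact rename_treeCofactor_of_apply_zero_ne hT
  have hinj : Set.InjOn RectifiedTree.eraseZero {T | T.1 0 = a.succ} := fun T hT T' hT' h =>
    Subtype.ext (eq_of_eraseZero_eq T.2.2 T'.2.2 (hT.trans hT'.symm) (congrArg Subtype.val h))
  have hmul :
      Injective (LinearMap.mulLeft R (∏ b with a ≠ b, (X a - X b) : MvPolynomial _ R)) :=
    mul_right_injective₀ <| prod_ne_zero_iff.2 fun _ hb => X_sub_X_ne_zero (mem_filter.1 hb).2
  refine (((ih.linearIndepOn _).comp_of_image hinj).map_injOn _ hmul.injOn).congr fun T hT => ?_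
  simp only [comp_apply, AlgHom.toLinearMap_apply, LinearMap.mulLeft_apply]
  exact (rename_treeCofactor_of_apply_zero_eq T.2.2 hT).symm

theorem linearIndependent_treeCofactor :
    (n : ℕ) → LinearIndependent R fun T : RectifiedTree n => treeCofactor R T.1
  | 0 | 1 => linearIndependent_treeCofactor_of_subsingleton
  | n + 2 => linearIndependent_treeCofactor_succ_succ (linearIndependent_treeCofactor (n + 1))

end Independence

/-- The rational functions `1/p_T`, as `T` ranges over the rectified directed trees on
`{1,…,n}`, are linearly independent over `ℂ` in `ℂ(z_1,…,z_n)`. -/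
theorem stmt3 (n : ℕ) :
    LinearIndependent ℂ
      (fun T : {p : Fin n → Fin n // IsTreeFn p ∧ ∀ i, p i ≠ i → i < p i} =>
        (algebraMap (MvPolynomial (Fin n) ℂ) (FractionRing (MvPolynomial (Fin n) ℂ))
          (treePoly T.1))⁻¹) := by
  set A := MvPolynomial (Fin n) ℂ
  set K := FractionRing A
  have hcof :
      LinearIndependent ℂ fun T : RectifiedTree n => algebraMap A K (treeCofactor ℂ T.1) :=
    (linearIndependent_treeCofactor n).map' (IsScalarTower.toAlgHom ℂ A K).toLinearMap
      (LinearMap.ker_eq_bot.2 (IsFractionRing.injective A K))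
  have hfun : LinearMap.mulLeft ℂ (algebraMap A K (vandermondeProd ℂ n)) ∘
      (fun T : RectifiedTree n => (algebraMap A K (treePoly T.1))⁻¹)
        = fun T => algebraMap A K (treeCofactor ℂ T.1) :=
    funext fun T => vandermondeProd_mul_inv_treePoly T.2.2
  exact .of_comp _ (hfun ▸ hcof)
end

section
/- In the exterior algebra of rational differential forms, with $\omega_{i,j,\eta} := (dz_i - \eta\, dz_j)/(z_i-\eta z_j)$, for any roots of unity $\eta,\theta$ the relation $\omega_{i,j,\eta\theta^{-1}}\wedge\omega_{j,k,\theta} + \omega_{i,k,\eta}\wedge\omega_{j,i,\theta\eta^{-1}} = \omega_{i,k,\eta}\wedge\omega_{j,k,\theta}$ holds. -/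
set_option synthInstance.maxHeartbeats 1000000
set_option maxHeartbeats 1000000

noncomputable section

/-- The field of rational functions `ℂ(z_i, z_j, z_k)` in three variables. -/
abbrev K3 : Type := FractionRing (MvPolynomial (Fin 3) ℂ)

/-- The coordinate functions. -/
def z3 (i : Fin 3) : K3 := algebraMap (MvPolynomial (Fin 3) ℂ) K3 (MvPolynomial.X i)

/-- A complex constant, viewed in `ℂ(z_i, z_j, z_k)`. -/
def c3 (a : ℂ) : K3 := algebraMap (MvPolynomial (Fin 3) ℂ) K3 (MvPolynomial.C a)

/-- The exterior algebra of differential forms with rational-function coefficients. -/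
abbrev E3 : Type := ExteriorAlgebra K3 (Fin 3 → K3)

/-- The 1-form `dz_i`. -/
def dz3 (i : Fin 3) : E3 := ExteriorAlgebra.ι K3 (Pi.single i 1)

/-- The 1-form `ω_{i,j,η} = (dz_i - η dz_j)/(z_i - η z_j)`. -/
def omE3 (i j : Fin 3) (η : ℂ) : E3 :=
  (z3 i - c3 η * z3 j)⁻¹ • (dz3 i - c3 η • dz3 j)

/-!
Each `ω` is a logarithmic form `f⁻¹ • df` with `f` linear, and rescaling `f` does not change
it; hence `ω_{j,i,θη⁻¹} = ω_{i,j,μ}` for `μ = ηθ⁻¹`. With `a = z_i - μ z_j` and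
`b = z_j - θ z_k` one has `z_i - η z_k = a + μ b`, so the identity is the Arnold relation between
the logarithmic forms of `a`, `b` and `a + μ b`. Every product in it is a multiple of `da ∧ db`, and the relation reduces to
`1/(ab) - μ/(a(a + μb)) = 1/(b(a + μb))`.
-/

section LogForm

open ExteriorAlgebra

variable {K M : Type*} [Field K] [AddCommGroup M] [Module K M]

def logForm (f : K) (v : M) : ExteriorAlgebra K M := f⁻¹ • ι K v

theorem logForm_smul {s : K} (hs : s ≠ 0) (f : K) (v : M) :
    logForm (s * f) (s • v) = logForm f v := by
  rw [logForm, logForm, map_smul, smul_smul, mul_inv_rev, mul_assoc, inv_mul_cancel₀ hs, mul_one]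

theorem logForm_arnold {a b : K} (m : K) (ha : a ≠ 0) (hb : b ≠ 0) (hc : a + m * b ≠ 0)
    (u v : M) :
    logForm a u * logForm b v + logForm (a + m * b) (u + m • v) * logForm a u =
      logForm (a + m * b) (u + m • v) * logForm b v := by
  have hu : ι K (u + m • v) * ι K u = (-m) • (ι K u * ι K v) := by
    rw [map_add, map_smul, add_mul, ι_sq_zero, zero_add, smul_mul_assoc, neg_smul,
      ← smul_neg, neg_eq_of_add_eq_zero_right (ι_add_mul_swap u v)]
  have hv : ι K (u + m • v) * ι K v = ι K u * ι K v := by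
    rw [map_add, map_smul, add_mul, smul_mul_assoc, ι_sq_zero, smul_zero, add_zero]
  simp only [logForm, smul_mul_smul_comm, hu, hv, smul_smul, ← add_smul]
  congr 1
  have hc' : a + b * m ≠ 0 := by rwa [mul_comm]
  field_simp
  ring

end LogForm

theorem c3_mul (a b : ℂ) : c3 (a * b) = c3 a * c3 b := by
  simp only [c3, map_mul]

theorem z3_sub_c3_mul_z3_ne_zero {i j : Fin 3} (hij : i ≠ j) (t : ℂ) :
    z3 i - c3 t * z3 j ≠ 0 := by
  have hpoly :
      (MvPolynomial.X i - MvPolynomial.C t * MvPolynomial.X j : MvPolynomial (Fin 3) ℂ) ≠ 0 := by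
    intro h
    simpa [Pi.single_eq_of_ne hij.symm] using congrArg (MvPolynomial.eval (Pi.single i 1)) h
  simpa [z3, c3] using (IsFractionRing.injective (MvPolynomial (Fin 3) ℂ) K3).ne hpoly

theorem z3_sub_eq_add {μ θ η : ℂ} (h : μ * θ = η) (i j k : Fin 3) :
    z3 i - c3 η * z3 k = (z3 i - c3 μ * z3 j) + c3 μ * (z3 j - c3 θ * z3 k) := by
  rw [← h, c3_mul]
  ring

theorem omE3_eq_logForm (i j : Fin 3) (η : ℂ) :
    omE3 i j η = logForm (z3 i - c3 η * z3 j) (Pi.single i 1 - c3 η • Pi.single j 1) := by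
  rw [omE3, logForm, dz3, dz3, map_sub, map_smul]

theorem omE3_eq_logForm_add {μ θ η : ℂ} (h : μ * θ = η) (i j k : Fin 3) :
    omE3 i k η = logForm ((z3 i - c3 μ * z3 j) + c3 μ * (z3 j - c3 θ * z3 k))
      ((Pi.single i 1 - c3 μ • Pi.single j 1) +
        c3 μ • (Pi.single j 1 - c3 θ • Pi.single k 1)) := by
  rw [omE3_eq_logForm, z3_sub_eq_add h i j k, ← h, c3_mul, smul_sub, smul_smul]
  abel_nf

theorem omE3_swap {μ ν : ℂ} (h : μ * ν = 1) (i j : Fin 3) : omE3 j i ν = omE3 i j μ := by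
  have hc : c3 μ * c3 ν = 1 := by rw [← c3_mul, h, c3, map_one, map_one]
  rw [omE3_eq_logForm, omE3_eq_logForm,
    ← logForm_smul (neg_ne_zero.mpr (left_ne_zero_of_mul_eq_one hc))]
  congr 1
  · linear_combination z3 i * hc
  · simp only [smul_sub, smul_smul, neg_mul, hc, neg_smul, one_smul]
    abel

/-- For roots of unity `η, θ`, with `i,j,k` the three coordinates `0,1,2`:
`ω_{i,j,ηθ⁻¹} ∧ ω_{j,k,θ} + ω_{i,k,η} ∧ ω_{j,i,θη⁻¹} = ω_{i,k,η} ∧ ω_{j,k,θ}`. -/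
theorem stmt7 (r : ℕ) (hr : 0 < r) (η θ : ℂ) (hη : η ^ r = 1) (hθ : θ ^ r = 1) :
    omE3 0 1 (η * θ⁻¹) * omE3 1 2 θ + omE3 0 2 η * omE3 1 0 (θ * η⁻¹)
      = omE3 0 2 η * omE3 1 2 θ := by
  have hη0 : η ≠ 0 := (IsUnit.of_pow_eq_one hη hr.ne').ne_zero
  have hθ0 : θ ≠ 0 := (IsUnit.of_pow_eq_one hθ hr.ne').ne_zero
  have hμθ : η * θ⁻¹ * θ = η := inv_mul_cancel_right₀ hθ0 η
  have hμν : η * θ⁻¹ * (θ * η⁻¹) = 1 := by field_simp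
  rw [omE3_swap hμν, omE3_eq_logForm_add hμθ 0 1 2, omE3_eq_logForm, omE3_eq_logForm]
  exact logForm_arnold _ (z3_sub_c3_mul_z3_ne_zero (by decide) _)
    (z3_sub_c3_mul_z3_ne_zero (by decide) _)
    (z3_sub_eq_add hμθ 0 1 2 ▸ z3_sub_c3_mul_z3_ne_zero (by decide) _) _ _

end
end

section
/- For any integer $a$ and positive integer $r$, the identity $\sum_{\eta \in \mu_r} \frac{\eta^a}{z - \eta w} = \frac{r\, z^{a-1-r\lfloor (a-1)/r\rfloor}\, w^{r-a+r\lfloor (a-1)/r\rfloor}}{z^r - w^r}$ holds in $\mathbb{C}(z,w)$, where $\mu_r$ is the group of complex $r$th roots of unity. -/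
/-! For `η ^ r = 1`, the factorisation `z ^ r - w ^ r = (z - η w) ∑_{j<r} z ^ j (η w) ^ (r-1-j)`
expands `η ^ a / (z - η w)` over the common denominator `z ^ r - w ^ r`. Summing over the `r`-th
roots of unity, the coefficient of `z ^ j w ^ (r-1-j)` becomes the power sum `∑_η η ^ (a+r-1-j)`,
which is `r` if `r ∣ a + r - 1 - j` and `0` otherwise (multiplying by a primitive root permutes
the roots); so only `j = (a - 1) % r` survives. -/

noncomputable section

/-- The field of rational functions `ℂ(z, w)`; `z` is variable `0`, `w` is variable `1`. -/
abbrev KK : Type := FractionRing (MvPolynomial (Fin 2) ℂ)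

def zz : KK := algebraMap (MvPolynomial (Fin 2) ℂ) KK (MvPolynomial.X 0)
def ww : KK := algebraMap (MvPolynomial (Fin 2) ℂ) KK (MvPolynomial.X 1)
def cst (a : ℂ) : KK := algebraMap (MvPolynomial (Fin 2) ℂ) KK (MvPolynomial.C a)

open Polynomial Finset

section RootsOfUnity

variable {F L : Type*} [Field F] [Field L] [Algebra F L]

theorem sum_nthRootsFinset_one_zpow {r : ℕ} {ζ : F} (hζ : IsPrimitiveRoot ζ r) (m : ℤ) :
    ∑ η ∈ nthRootsFinset r (1 : F), η ^ m = if (r : ℤ) ∣ m then (r : F) else 0 := by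
  obtain rfl | hr := r.eq_zero_or_pos
  · simp
  split_ifs with hm
  · obtain ⟨k, rfl⟩ := hm
    have hterm : ∀ η ∈ nthRootsFinset r (1 : F), η ^ ((r : ℤ) * k) = 1 := fun η hη => by
      rw [zpow_mul, zpow_natCast, (mem_nthRootsFinset hr 1).1 hη, one_zpow]
    rw [sum_congr rfl hterm, sum_const, hζ.card_nthRootsFinset, nsmul_one]
  · have hζm : ζ ^ m ≠ 1 := fun h => hm ((hζ.zpow_eq_one_iff_dvd m).1 h)
    have hζ0 : ζ ≠ 0 := hζ.ne_zero hr.ne'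
    have hmem : ζ ∈ nthRootsFinset r (1 : F) := hζ.mem_nthRootsFinset hr
    have hinv : ζ⁻¹ ∈ nthRootsFinset r (1 : F) := hζ.inv.mem_nthRootsFinset hr
    have hshift : ∑ η ∈ nthRootsFinset r (1 : F), (ζ * η) ^ m
        = ∑ η ∈ nthRootsFinset r (1 : F), η ^ m :=
      sum_nbij' (ζ * ·) (ζ⁻¹ * ·) (fun η hη => by simpa using mul_mem_nthRootsFinset hmem hη)
        (fun η hη => by simpa using mul_mem_nthRootsFinset hinv hη)
        (fun η _ => inv_mul_cancel_left₀ hζ0 η) (fun η _ => mul_inv_cancel_left₀ hζ0 η)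
        (fun _ _ => rfl)
    simp only [mul_zpow, ← mul_sum] at hshift
    exact (mul_left_eq_self₀.1 hshift).resolve_left hζm

theorem inv_sub_mul_eq_geom_sum_div {r : ℕ} {η z w : L} (hη : η ^ r = 1)
    (hzw : z ^ r - w ^ r ≠ 0) :
    (z - η * w)⁻¹ = (∑ j ∈ range r, z ^ j * (η * w) ^ (r - 1 - j)) / (z ^ r - w ^ r) := by
  have hfactor : (∑ j ∈ range r, z ^ j * (η * w) ^ (r - 1 - j)) * (z - η * w) = z ^ r - w ^ r := by
    rw [geom_sum₂_mul, mul_pow, hη, one_mul]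
  have hne : z - η * w ≠ 0 := fun h => hzw (by rw [← hfactor, h, mul_zero])
  rw [eq_div_iff hzw, ← hfactor, mul_left_comm, inv_mul_cancel₀ hne, mul_one]

theorem sum_nthRootsFinset_zpow_div_sub_mul {r : ℕ} {ζ : F} (hζ : IsPrimitiveRoot ζ r)
    {z w : L} (hzw : z ^ r - w ^ r ≠ 0) {a : ℤ} {b : ℕ} (hb : (a - 1) % (r : ℤ) = b) :
    ∑ η ∈ nthRootsFinset r (1 : F), algebraMap F L (η ^ a) / (z - algebraMap F L η * w)
      = r * z ^ b * w ^ (r - 1 - b) / (z ^ r - w ^ r) := by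
  have hr : 0 < r := Nat.pos_of_ne_zero fun h => hzw (by simp [h])
  have hbr : b < r := by have := Int.emod_lt_of_pos (a - 1) (Int.natCast_pos.2 hr); omega
  have hdvd (j : ℕ) (hj : j < r) : (r : ℤ) ∣ a + (r - 1 - j : ℕ) ↔ j = b := by
    have hshift : a + ((r - 1 - j : ℕ) : ℤ) = (a - 1 - j) + r := by omega
    rw [hshift, dvd_add_left (dvd_refl _), ← Int.modEq_iff_dvd, Int.ModEq, hb,
      Int.emod_eq_of_lt (by omega) (by omega)]
    omega
  calc ∑ η ∈ nthRootsFinset r (1 : F), algebraMap F L (η ^ a) / (z - algebraMap F L η * w)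
      = (∑ j ∈ range r, algebraMap F L (∑ η ∈ nthRootsFinset r (1 : F), η ^ (a + (r - 1 - j : ℕ)))
          * (z ^ j * w ^ (r - 1 - j))) / (z ^ r - w ^ r) := by
        simp only [map_sum, sum_mul, sum_div]
        rw [sum_comm]
        refine sum_congr rfl fun η hη => ?_
        have hη1 : η ^ r = 1 := (mem_nthRootsFinset hr 1).1 hη
        have hη0 : η ≠ 0 := ne_zero_of_mem_nthRootsFinset one_ne_zero hη
        rw [div_eq_mul_inv, inv_sub_mul_eq_geom_sum_div (by rw [← map_pow, hη1, map_one]) hzw,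
          mul_div_assoc', mul_sum, sum_div]
        refine sum_congr rfl fun j _ => ?_
        rw [zpow_add₀ hη0, zpow_natCast, map_mul, map_pow, mul_pow]
        ring
    _ = r * z ^ b * w ^ (r - 1 - b) / (z ^ r - w ^ r) := by
        congr 1
        simp only [sum_nthRootsFinset_one_zpow hζ]
        rw [sum_eq_single_of_mem b (mem_range.2 hbr)]
        · simp [hdvd b hbr, mul_assoc]
        · intro j hj hjb
          simp [hdvd j (mem_range.1 hj), hjb]

end RootsOfUnity

theorem cst_eq_algebraMap (x : ℂ) : cst x = algebraMap ℂ KK x := by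
  rw [cst, ← MvPolynomial.algebraMap_eq, ← IsScalarTower.algebraMap_apply]

theorem zz_pow_sub_ww_pow_ne_zero {r : ℕ} (hr : r ≠ 0) : zz ^ r - ww ^ r ≠ 0 := by
  rw [zz, ww, ← map_pow, ← map_pow, ← map_sub, map_ne_zero_iff _ (IsFractionRing.injective _ _)]
  intro h
  simpa [hr] using congrArg (MvPolynomial.eval ![1, 0]) h

open Polynomial in
/-- For an integer `a` and `0 < r`,
`∑_{η^r = 1} η^a/(z - η w) = r z^(a-1-r⌊(a-1)/r⌋) w^(r-a+r⌊(a-1)/r⌋) / (z^r - w^r)`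
in `ℂ(z,w)`.  (Note `a - 1 - r⌊(a-1)/r⌋ = (a-1) % r` and
`r - a + r⌊(a-1)/r⌋ = r - 1 - (a-1) % r`.) -/
theorem stmt8 (r : ℕ) (hr : 0 < r) (a : ℤ) :
    ∑ η ∈ nthRootsFinset r (1 : ℂ), cst (η ^ a) / (zz - cst η * ww)
      = (r : KK) * zz ^ (a - 1 - r * ((a - 1) / r)).toNat
          * ww ^ ((r : ℤ) - a + r * ((a - 1) / r)).toNat / (zz ^ r - ww ^ r) := by
  have hmod : (a - 1) % r = a - 1 - r * ((a - 1) / r) := Int.emod_def _ _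
  have hnonneg : 0 ≤ (a - 1) % r := Int.emod_nonneg _ (by omega)
  have hlt : (a - 1) % r < r := Int.emod_lt_of_pos _ (by omega)
  have hb : (a - 1) % (r : ℤ) = ((a - 1 - r * ((a - 1) / r)).toNat : ℕ) := by omega
  have hexp : ((r : ℤ) - a + r * ((a - 1) / r)).toNat
      = r - 1 - (a - 1 - r * ((a - 1) / r)).toNat := by
    omega
  simp only [cst_eq_algebraMap]
  rw [hexp, sum_nthRootsFinset_zpow_div_sub_mul (Complex.isPrimitiveRoot_exp r hr.ne')
    (zz_pow_sub_ww_pow_ne_zero hr.ne') hb]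

end
end

section
/- Let $p$ be prime and $a,b,c \in \mathbb{N}$ with $c \le a+b$. Then $\mu(p^c) = \sum \frac{\mu(p^y)\,\mu(p^{x-\min\{b,x\}})\,\phi(p^x)}{\phi(p^{x-\min\{b,x\}})}$, where the sum is over pairs $(x,y)$ with $0 \le x \le a$, $0 \le y \le b$, and $\max\{x,y\} = c$. -/
/-!
Write the summand as `μ(p^y) · g(x)`. The level set `{max x y = c}` of the box `[0, a] × [0, b]` is
an L-shape: on its leg `x = c`, `y ≤ min b c` the factor `∑_{y ≤ n} μ(p^y)` vanishes unless `n = 0`,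
and its leg `y = c`, `x < c` carries the factor `μ(p^c)`, which vanishes for `c ≥ 2`. What survives
is `c = 0`, the case `b = 0` (where `g = μ(p^·)`), and `c = 1` (where only `g 0 = 1` contributes).
-/

open ArithmeticFunction Finset

theorem ArithmeticFunction.sum_range_moebius_prime_pow {p : ℕ} (hp : p.Prime) (n : ℕ) :
    ∑ y ∈ range (n + 1), moebius (p ^ y) = if n = 0 then 1 else 0 := by
  rw [← Nat.sum_divisors_prime_pow hp, ← coe_mul_zeta_apply, moebius_mul_coe_zeta, one_apply]
  simp [hp.ne_one]

theorem Finset.sum_range_sum_range_ite_max_eq {M : Type*} [AddCommMonoid M] (f : ℕ → ℕ → M)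
    (a b c : ℕ) :
    ∑ x ∈ range (a + 1), ∑ y ∈ range (b + 1), (if max x y = c then f x y else 0) =
      (if c ≤ a then ∑ y ∈ range (min b c + 1), f c y else 0) +
        if c ≤ b then ∑ x ∈ range (min (a + 1) c), f x c else 0 := by
  have ite_max_eq : ∀ x y, (if max x y = c then f x y else 0) =
      (if x = c then (if y ≤ c then f c y else 0) else 0) +
        if y = c then (if x < c then f x c else 0) else 0 := by
    intro x y
    split_ifs <;> simp_all <;> omega
  have vertical : ∑ x ∈ range (a + 1), ∑ y ∈ range (b + 1),
      (if x = c then (if y ≤ c then f c y else 0) else 0) =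
        if c ≤ a then ∑ y ∈ range (min b c + 1), f c y else 0 := by
    have : (range (b + 1)).filter (· ≤ c) = range (min b c + 1) := by ext; simp
    simp_rw [sum_ite_irrel, sum_const_zero, sum_ite_eq', ← sum_filter, this, mem_range,
      Nat.lt_succ_iff]
  have horizontal : ∑ x ∈ range (a + 1), ∑ y ∈ range (b + 1),
      (if y = c then (if x < c then f x c else 0) else 0) =
        if c ≤ b then ∑ x ∈ range (min (a + 1) c), f x c else 0 := by
    have : (range (a + 1)).filter (· < c) = range (min (a + 1) c) := by ext; simp
    rw [sum_comm]
    simp_rw [sum_ite_irrel, sum_const_zero, sum_ite_eq', ← sum_filter, this, mem_range,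
      Nat.lt_succ_iff]
  simp_rw [ite_max_eq, sum_add_distrib, vertical, horizontal]

/-- For a prime `p` and `a, b, c ∈ ℕ` with `c ≤ a + b`,
`μ(p^c) = ∑ μ(p^y) μ(p^(x - min b x)) φ(p^x) / φ(p^(x - min b x))`,
summing over `0 ≤ x ≤ a`, `0 ≤ y ≤ b` with `max x y = c`. -/
theorem stmt10 (p : ℕ) (hp : p.Prime) (a b c : ℕ) (hc : c ≤ a + b) :
    (moebius (p ^ c) : ℚ) =
      ∑ x ∈ Finset.range (a + 1), ∑ y ∈ Finset.range (b + 1),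
        if max x y = c then
          (moebius (p ^ y) : ℚ) * (moebius (p ^ (x - min b x)) : ℚ)
            * (Nat.totient (p ^ x) : ℚ) / (Nat.totient (p ^ (x - min b x)) : ℚ)
        else 0 := by
  set g : ℕ → ℚ := fun x =>
    moebius (p ^ (x - min b x)) * Nat.totient (p ^ x) / Nat.totient (p ^ (x - min b x))
  have summand_eq : ∀ x y, (moebius (p ^ y) : ℚ) * (moebius (p ^ (x - min b x)) : ℚ)
      * (Nat.totient (p ^ x) : ℚ) / (Nat.totient (p ^ (x - min b x)) : ℚ) =
        moebius (p ^ y) * g x := fun x y => by ring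
  have hμ : ∀ n, ∑ y ∈ range (n + 1), (moebius (p ^ y) : ℚ) = if n = 0 then 1 else 0 :=
    fun n => mod_cast sum_range_moebius_prime_pow hp n
  simp only [summand_eq]
  rw [sum_range_sum_range_ite_max_eq, ← sum_mul, ← mul_sum, hμ]
  have hφ : ∀ k, (Nat.totient (p ^ k) : ℚ) ≠ 0 := fun k =>
    mod_cast (Nat.totient_pos.mpr (pow_pos hp.pos k)).ne'
  rcases Nat.eq_zero_or_pos c with rfl | hc0
  · simp [g]
  rcases Nat.eq_zero_or_pos b with rfl | hb0
  · have hca : c ≤ a := by omega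
    simp [g, hca, hc0.ne', hφ]
  rw [if_neg (show min b c ≠ 0 by omega), zero_mul, ite_self, zero_add]
  rcases eq_or_ne c 1 with rfl | hc1
  · simp [g, hb0.ne']
  · simp [moebius_apply_prime_pow hp hc0.ne', hc1]
end

section
/- Let $r \mid n$ and $d \mid n$. Then $\sum_{\zeta \in \mu_d^{\circ}} \zeta = \sum_{e \mid r,\, f \mid (n/r),\, \mathrm{lcm}(e,f)=d} \;\sum_{\eta\in\mu_e^{\circ},\,\theta\in\mu_f^{\circ}} \eta^{n/r}\theta$, i.e. $\mu(d) = \sum_{\substack{e\mid r,\ f\mid(n/r)\\ \mathrm{lcm}(e,f)=d}} \frac{\mu(f)\,\mu(e/\gcd(n/r,e))\,\phi(e)}{\phi(e/\gcd(n/r,e))}$. -/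
/-!
Write `m = n / r`. Both sides of the first identity are determined by their divisor sums over
the divisors of `n = r m`. For `D ∣ r m`, summing the right-hand side over `c ∣ D` drops the condition
`lcm(e, f) = c` and factors into a power sum over the `gcd(r, D)`-th roots of unity times the
plain sum of the `gcd(m, D)`-th roots of unity. This is `1` for `D = 1` and `0` otherwise, just
like the sum of all `D`-th roots of unity, because `D ∣ r m`, `gcd(m, D) = 1` and
`gcd(r, D) ∣ m` force `D = 1`.

The second identity evaluates the inner sums: the one over `θ` is `μ(f)`, and the one over `η`
is a Ramanujan sum. Writing the primitive `e`-th roots as `ζ^u` with `u ∈ (ℤ/e)ˣ`, the `m`-th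
powers factor through the surjection `(ℤ/e)ˣ → (ℤ/e')ˣ`, `e' = e / gcd(m, e)`, all of whose
fibres have `φ(e) / φ(e')` elements.
-/

open Finset Polynomial ArithmeticFunction
open scoped ArithmeticFunction.Moebius Nat

theorem MonoidHom.sum_comp_of_surjective {G H M : Type*} [Group G] [Fintype G] [Group H]
    [Fintype H] [DecidableEq H] [AddCommMonoid M] (f : G →* H) (hf : Function.Surjective f)
    (F : H → M) : ∑ g, F (f g) = #{g | f g = 1} • ∑ h, F h := by
  rw [← sum_fiberwise univ f, smul_sum]
  refine sum_congr rfl fun h _ => ?_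
  rw [sum_congr rfl fun g hg => by rw [(mem_filter.mp hg).2], sum_const,
    MonoidHom.card_fiber_eq_of_mem_range f (hf h) ⟨1, map_one f⟩]

theorem MonoidHom.card_eq_card_fiber_mul_card_of_surjective {G H : Type*} [Group G] [Fintype G]
    [Group H] [Fintype H] [DecidableEq H] (f : G →* H) (hf : Function.Surjective f) :
    Fintype.card G = #{g | f g = 1} * Fintype.card H := by
  simpa only [sum_const, card_univ, smul_eq_mul, mul_one] using
    f.sum_comp_of_surjective hf fun _ => (1 : ℕ)

theorem ArithmeticFunction.sum_divisors_moebius {R : Type*} [Ring R] (n : ℕ) :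
    ∑ c ∈ n.divisors, (μ c : R) = if n = 1 then 1 else 0 := by
  have h := congrArg (· n) (coe_moebius_mul_coe_zeta (R := R))
  simpa only [coe_mul_zeta_apply, intCoe_apply, one_apply] using h

theorem Nat.eq_on_dvd_of_sum_divisors_eq {M : Type*} [AddCommGroup M] {N : ℕ} (hN : N ≠ 0)
    {F G : ℕ → M}
    (h : ∀ D, D ∣ N → ∑ c ∈ D.divisors, F c = ∑ c ∈ D.divisors, G c) :
    ∀ d, d ∣ N → F d = G d := by
  have hs : ∀ a b, a ∣ b → b ∈ {D | D ∣ N} → a ∈ {D | D ∣ N} :=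
    fun _ _ hab hb => hab.trans hb
  have hF := (sum_eq_iff_sum_smul_moebius_eq_on (f := F) _ hs).mp fun D _ _ => rfl
  have hG := (sum_eq_iff_sum_smul_moebius_eq_on (f := G) _ hs).mp fun D _ hD => (h D hD).symm
  intro d hd
  have hd0 : 0 < d := Nat.pos_of_dvd_of_pos hd (Nat.pos_of_ne_zero hN)
  rw [← hF d hd0 hd, ← hG d hd0 hd]

theorem Nat.eq_one_of_dvd_mul_of_gcd_dvd {r m D : ℕ} (hD : D ∣ r * m) (hr : r.gcd D ∣ m)
    (hm : m.gcd D = 1) : D = 1 := by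
  have hrD : r.gcd D = 1 := Nat.eq_one_of_dvd_one (hm ▸ Nat.dvd_gcd hr (Nat.gcd_dvd_right r D))
  have hDm : D ∣ m := (Nat.coprime_comm.mp hrD).dvd_of_dvd_mul_left hD
  exact Nat.eq_one_of_dvd_one (hm ▸ Nat.dvd_gcd hDm dvd_rfl)

theorem Nat.sum_divisors_sum_filter_lcm_eq {M : Type*} [AddCommMonoid M] {a b D : ℕ}
    (ha : a ≠ 0) (hb : b ≠ 0) (hD : D ≠ 0) (H : ℕ × ℕ → M) :
    ∑ c ∈ D.divisors,
        ∑ ef ∈ (a.divisors ×ˢ b.divisors).filter (fun ef => ef.1.lcm ef.2 = c), H ef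
      = ∑ ef ∈ (a.gcd D).divisors ×ˢ (b.gcd D).divisors, H ef := by
  rw [sum_fiberwise_eq_sum_filter]
  congr 1
  ext ⟨e, f⟩
  simp only [mem_filter, mem_product, Nat.mem_divisors, Nat.lcm_dvd_iff, Nat.dvd_gcd_iff]
  grind [Nat.gcd_ne_zero_left]

namespace IsPrimitiveRoot

section CommMonoid

variable {M : Type*} [CommMonoid M] {ζ : M} {k : ℕ}

theorem pow_div_gcd [NeZero k] (hζ : IsPrimitiveRoot ζ k) (m : ℕ) :
    IsPrimitiveRoot (ζ ^ m) (k / k.gcd m) := by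
  rw [IsPrimitiveRoot.iff_orderOf, (hζ.isOfFinOrder (NeZero.ne k)).orderOf_pow, ← hζ.eq_orderOf]

theorem pow_val_unitsMap {n : ℕ} [NeZero k] (hζ : IsPrimitiveRoot ζ n) (h : n ∣ k)
    (u : (ZMod k)ˣ) : ζ ^ (ZMod.unitsMap h u : ZMod n).val = ζ ^ (u : ZMod k).val := by
  rw [ZMod.unitsMap_val, ZMod.cast_eq_val, ZMod.val_natCast, hζ.eq_orderOf, pow_mod_orderOf]

end CommMonoid

variable {R : Type*} [CommRing R] [IsDomain R] {ζ : R} {k : ℕ} [NeZero k]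

theorem sum_nthRootsFinset_pow (hζ : IsPrimitiveRoot ζ k) (m : ℕ) :
    ∑ z ∈ nthRootsFinset k (1 : R), z ^ m = if k ∣ m then (k : R) else 0 := by
  have hgeom : ∑ z ∈ nthRootsFinset k (1 : R), z ^ m = ∑ i ∈ range k, (ζ ^ m) ^ i := by
    symm
    refine sum_nbij (ζ ^ ·) (fun i _ => ?_) (fun i hi j hj h => ?_) (fun z hz => ?_)
      (fun i _ => by rw [← pow_mul, ← pow_mul, mul_comm])
    · rw [Polynomial.mem_nthRootsFinset (NeZero.pos k), ← pow_mul, mul_comm, pow_mul,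
        hζ.pow_eq_one, one_pow]
    · exact hζ.pow_inj (mem_range.mp hi) (mem_range.mp hj) h
    · obtain ⟨i, hi, rfl⟩ :=
        hζ.eq_pow_of_pow_eq_one ((Polynomial.mem_nthRootsFinset (NeZero.pos k) 1).mp hz)
      exact ⟨i, mem_range.mpr hi, rfl⟩
  rw [hgeom]
  split_ifs with hkm
  · obtain ⟨c, rfl⟩ := hkm
    simp [pow_mul, hζ.pow_eq_one]
  · have hζm : ζ ^ m - 1 ≠ 0 := sub_ne_zero.mpr fun h => hkm (hζ.pow_eq_one_iff_dvd m |>.mp h)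
    refine (mul_left_inj' hζm).mp ?_
    rw [geom_sum_mul, zero_mul, ← pow_mul, mul_comm, pow_mul, hζ.pow_eq_one, one_pow, sub_self]

theorem sum_divisors_sum_primitiveRoots_pow [DecidableEq R] (hζ : IsPrimitiveRoot ζ k)
    (m : ℕ) :
    ∑ c ∈ k.divisors, ∑ z ∈ primitiveRoots c R, z ^ m = if k ∣ m then (k : R) else 0 := by
  rw [← hζ.sum_nthRootsFinset_pow m, nthRoots_one_eq_biUnion_primitiveRoots,
    sum_biUnion fun _ _ _ _ h => IsPrimitiveRoot.disjoint h]

theorem sum_divisors_sum_primitiveRoots [DecidableEq R] (hζ : IsPrimitiveRoot ζ k) :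
    ∑ c ∈ k.divisors, ∑ z ∈ primitiveRoots c R, z = if k = 1 then 1 else 0 := by
  have h := hζ.sum_divisors_sum_primitiveRoots_pow 1
  simp only [pow_one, Nat.dvd_one] at h
  rw [h]
  split_ifs with hk <;> simp [hk]

theorem sum_primitiveRoots_eq_sum_units (hζ : IsPrimitiveRoot ζ k) {M : Type*}
    [AddCommMonoid M] (F : R → M) :
    ∑ η ∈ primitiveRoots k R, F η = ∑ u : (ZMod k)ˣ, F (ζ ^ (u : ZMod k).val) := by
  symm
  refine sum_nbij (fun u => ζ ^ (u : ZMod k).val) (fun u _ => ?_)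
    (fun u _ v _ h => ?_) (fun η hη => ?_) (fun _ _ => rfl)
  · exact (mem_primitiveRoots (NeZero.pos k)).mpr
      (hζ.pow_of_coprime _ (ZMod.val_coe_unit_coprime u))
  · exact Units.ext (ZMod.val_injective k (hζ.pow_inj (ZMod.val_lt _) (ZMod.val_lt _) h))
  · obtain ⟨i, hik, hi, rfl⟩ :=
      hζ.isPrimitiveRoot_iff.mp ((mem_primitiveRoots (NeZero.pos k)).mp hη)
    refine ⟨ZMod.unitOfCoprime i hi, mem_coe.mpr (mem_univ _), ?_⟩
    simp [ZMod.val_natCast, Nat.mod_eq_of_lt hik]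

end IsPrimitiveRoot

namespace Complex

theorem sum_primitiveRoots_eq_moebius (d : ℕ) : ∑ z ∈ primitiveRoots d ℂ, z = μ d := by
  rcases eq_or_ne d 0 with rfl | hd
  · simp
  refine Nat.eq_on_dvd_of_sum_divisors_eq (F := fun c => ∑ z ∈ primitiveRoots c ℂ, z)
    (G := fun c => (μ c : ℂ)) hd (fun D hD => ?_) d dvd_rfl
  have : NeZero D := ⟨ne_zero_of_dvd_ne_zero hd hD⟩
  rw [(isPrimitiveRoot_exp D (NeZero.ne D)).sum_divisors_sum_primitiveRoots, sum_divisors_moebius]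

theorem sum_primitiveRoots_pow {e : ℕ} (he : e ≠ 0) (m : ℕ) :
    ∑ η ∈ primitiveRoots e ℂ, η ^ m = μ (e / m.gcd e) * φ e / φ (e / m.gcd e) := by
  have : NeZero e := ⟨he⟩
  set e' := e / m.gcd e
  have he' : e' ∣ e := Nat.div_dvd_of_dvd (Nat.gcd_dvd_right m e)
  have : NeZero e' := ⟨Nat.div_ne_zero_iff_of_dvd (Nat.gcd_dvd_right m e) |>.mpr
    ⟨he, (Nat.gcd_pos_of_pos_right m (Nat.pos_of_ne_zero he)).ne'⟩⟩
  have hζ := isPrimitiveRoot_exp e he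
  set ζ := exp (2 * Real.pi * I / e)
  have hψ : IsPrimitiveRoot (ζ ^ m) e' := by simpa [e', Nat.gcd_comm] using hζ.pow_div_gcd m
  set W := ZMod.unitsMap he'
  have hW := ZMod.unitsMap_surjective he'
  have hsum : ∑ η ∈ primitiveRoots e ℂ, η ^ m = #{u | W u = 1} • (μ e' : ℂ) := calc
    ∑ η ∈ primitiveRoots e ℂ, η ^ m = ∑ u, (ζ ^ m) ^ (W u : ZMod e').val := by
      rw [hζ.sum_primitiveRoots_eq_sum_units]
      refine sum_congr rfl fun u _ => ?_
      rw [hψ.pow_val_unitsMap, ← pow_mul, ← pow_mul, mul_comm]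
    _ = #{u | W u = 1} • ∑ v : (ZMod e')ˣ, (ζ ^ m) ^ (v : ZMod e').val :=
      W.sum_comp_of_surjective hW fun v => (ζ ^ m) ^ (v : ZMod e').val
    _ = #{u | W u = 1} • (μ e' : ℂ) := by
      rw [← sum_primitiveRoots_eq_moebius, hψ.sum_primitiveRoots_eq_sum_units fun z => z]
  have hcard := W.card_eq_card_fiber_mul_card_of_surjective hW
  rw [ZMod.card_units_eq_totient, ZMod.card_units_eq_totient] at hcard
  have hφ' : (φ e' : ℂ) ≠ 0 := Nat.cast_ne_zero.mpr (Nat.totient_pos.mpr (NeZero.pos e')).ne'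
  rw [hsum, eq_div_iff hφ', hcard, nsmul_eq_mul]
  push_cast
  ring

theorem sum_primitiveRoots_eq_sum_lcm {r m d : ℕ} (hr : r ≠ 0) (hm : m ≠ 0)
    (hd : d ∣ r * m) :
    ∑ z ∈ primitiveRoots d ℂ, z =
      ∑ ef ∈ (r.divisors ×ˢ m.divisors).filter (fun ef => ef.1.lcm ef.2 = d),
        ∑ η ∈ primitiveRoots ef.1 ℂ, ∑ θ ∈ primitiveRoots ef.2 ℂ, η ^ m * θ := by
  refine Nat.eq_on_dvd_of_sum_divisors_eq (mul_ne_zero hr hm)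
    (F := fun c => ∑ z ∈ primitiveRoots c ℂ, z)
    (G := fun c => ∑ ef ∈ (r.divisors ×ˢ m.divisors).filter (fun ef => ef.1.lcm ef.2 = c),
        ∑ η ∈ primitiveRoots ef.1 ℂ, ∑ θ ∈ primitiveRoots ef.2 ℂ, η ^ m * θ)
    (fun D hD => ?_) d hd
  have hD0 : D ≠ 0 := ne_zero_of_dvd_ne_zero (mul_ne_zero hr hm) hD
  have : NeZero D := ⟨hD0⟩
  have : NeZero (r.gcd D) := ⟨Nat.gcd_ne_zero_right hD0⟩
  have : NeZero (m.gcd D) := ⟨Nat.gcd_ne_zero_right hD0⟩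
  have hζ (k : ℕ) [NeZero k] := isPrimitiveRoot_exp k (NeZero.ne k)
  simp only [Nat.sum_divisors_sum_filter_lcm_eq hr hm hD0, sum_product, ← sum_mul_sum]
  rw [(hζ D).sum_divisors_sum_primitiveRoots, (hζ _).sum_divisors_sum_primitiveRoots_pow,
    (hζ _).sum_divisors_sum_primitiveRoots]
  rcases eq_or_ne D 1 with rfl | hD1
  · simp
  rw [if_neg hD1]
  split_ifs with hrD hmD
  · exact absurd (Nat.eq_one_of_dvd_mul_of_gcd_dvd hD hrD hmD) hD1
  all_goals simp

end Complex

open ArithmeticFunction in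
/-- For `r ∣ n` and `d ∣ n`: the sum of the primitive `d`-th roots of unity equals
`∑_{e ∣ r, f ∣ (n/r), lcm(e,f) = d} ∑_{η ∈ μ_e°, θ ∈ μ_f°} η^(n/r) θ`; equivalently,
`μ(d) = ∑_{e,f} μ(f) μ(e/gcd(n/r,e)) φ(e) / φ(e/gcd(n/r,e))`. -/
theorem stmt11 (n r d : ℕ) (hn : 0 < n) (hr : r ∣ n) (hd : d ∣ n) :
    (∑ z ∈ primitiveRoots d ℂ, z =
        ∑ ef ∈ (Nat.divisors r ×ˢ Nat.divisors (n / r)).filter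
          (fun ef => Nat.lcm ef.1 ef.2 = d),
          ∑ η ∈ primitiveRoots ef.1 ℂ, ∑ θ ∈ primitiveRoots ef.2 ℂ, η ^ (n / r) * θ)
    ∧ ((moebius d : ℚ) =
        ∑ ef ∈ (Nat.divisors r ×ˢ Nat.divisors (n / r)).filter
          (fun ef => Nat.lcm ef.1 ef.2 = d),
          (moebius ef.2 : ℚ) * (moebius (ef.1 / Nat.gcd (n / r) ef.1) : ℚ)
            * (Nat.totient ef.1 : ℚ) / (Nat.totient (ef.1 / Nat.gcd (n / r) ef.1) : ℚ)) := by
  have hr0 : r ≠ 0 := ne_zero_of_dvd_ne_zero hn.ne' hr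
  have hm0 : n / r ≠ 0 := (Nat.div_pos (Nat.le_of_dvd hn hr) (Nat.pos_of_ne_zero hr0)).ne'
  have hlcm := Complex.sum_primitiveRoots_eq_sum_lcm hr0 hm0 (d := d)
    (by rwa [Nat.mul_div_cancel' hr])
  refine ⟨hlcm, Rat.cast_injective (α := ℂ) ?_⟩
  push_cast
  rw [← Complex.sum_primitiveRoots_eq_moebius, hlcm]
  refine sum_congr rfl fun ef hef => ?_
  have he : ef.1 ≠ 0 := (Nat.pos_of_mem_divisors (mem_product.mp (mem_filter.mp hef).1).1).ne'
  rw [← sum_mul_sum, Complex.sum_primitiveRoots_pow he, Complex.sum_primitiveRoots_eq_moebius]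
  ring
end

section
/- In the quotient space $\mathcal{V}(r,n)$ of the free vector space on $\mu_r$-labelled directed trees by the relations (3.1) and (3.2), every class $[T]$ equals the sum $\sum [\underline{\zeta} w . T_0]$ over all pairs $(\underline{\zeta}, w) \in Z \times S_n$ refining $T$, where $T_0$ is the chain $1\to 2\to\cdots\to n$ with all labels 1 and $Z = \{\underline{\zeta}\in\mu_r^n : \zeta_n = 1\}$. -/
/-- The set `𝒯(r,n)` of `μ_r`-labelled directed trees on `{1,…,n}`: a tree map together
with a labelling `ℓ` assigning to each non-root vertex `i` the label (an `r`-th root of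
unity) of the edge `i → p i`; the root carries the trivial label `1`. -/
def LTree (r n : ℕ) : Type :=
  {T : (Fin n → Fin n) × (Fin n → ℂ) //
    IsTreeFn T.1 ∧ (∀ i, T.2 i ^ r = 1) ∧ (∀ i, T.1 i = i → T.2 i = 1)}

/-- Relation (3.1): `T₁, T₂, T₃` are identical except among distinct vertices `i,j,k`,
where `T₁` has `i →(ηθ⁻¹) j →(θ) k`, `T₂` has `j →(θη⁻¹) i →(η) k`, and `T₃` has
`i →(η) k` and `j →(θ) k`. -/
def TripleRelL {r n : ℕ} (T1 T2 T3 : LTree r n) : Prop :=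
  ∃ i j k : Fin n, ∃ η θ : ℂ, i ≠ j ∧ j ≠ k ∧ i ≠ k ∧
    T1.1.1 i = j ∧ T1.1.1 j = k ∧ T1.1.2 i = η * θ⁻¹ ∧ T1.1.2 j = θ ∧
    T2.1.1 j = i ∧ T2.1.1 i = k ∧ T2.1.2 j = θ * η⁻¹ ∧ T2.1.2 i = η ∧
    T3.1.1 i = k ∧ T3.1.1 j = k ∧ T3.1.2 i = η ∧ T3.1.2 j = θ ∧
    ∀ a, a ≠ i → a ≠ j →
      T1.1.1 a = T2.1.1 a ∧ T2.1.1 a = T3.1.1 a ∧ T1.1.2 a = T2.1.2 a ∧ T2.1.2 a = T3.1.2 a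

/-- Relation (3.2): `T'` is obtained from `T` by replacing the edge `i →(η) j` into the
root `j` by the edge `j →(η⁻¹) i` (so `i` becomes the root). -/
def PairRelL {r n : ℕ} (T T' : LTree r n) : Prop :=
  ∃ i j : Fin n, ∃ η : ℂ, i ≠ j ∧
    T.1.1 i = j ∧ T.1.1 j = j ∧ T.1.2 i = η ∧
    T'.1.1 j = i ∧ T'.1.1 i = i ∧ T'.1.2 j = η⁻¹ ∧
    ∀ a, a ≠ i → a ≠ j → T.1.1 a = T'.1.1 a ∧ T.1.2 a = T'.1.2 a

/-- The defining relations of `𝒱(r,n)` inside the free vector space `ℂ𝒯(r,n)`. -/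
def relSetL (r n : ℕ) : Set (LTree r n →₀ ℂ) :=
  {x | ∃ T1 T2 T3 : LTree r n, TripleRelL T1 T2 T3 ∧
        x = Finsupp.single T1 1 + Finsupp.single T2 1 - Finsupp.single T3 1} ∪
  {x | ∃ T T' : LTree r n, PairRelL T T' ∧
        x = Finsupp.single T 1 + Finsupp.single T' 1}

/-- The space `𝒱(r,n)`. -/
def VL (r n : ℕ) : Type := (LTree r n →₀ ℂ) ⧸ Submodule.span ℂ (relSetL r n)

noncomputable instance (r n : ℕ) : AddCommGroup (VL r n) :=
  Submodule.Quotient.addCommGroup _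

noncomputable instance (r n : ℕ) : Module ℂ (VL r n) := Submodule.Quotient.module _

/-- `T` is the chain `ζw.T₀`, the translate by `(ζ, w) ∈ μ_r^n × S_n` of the chain
`T₀ = (1 → 2 → ⋯ → n)` with trivial labels: its edges are `w(i) → w(i+1)` with label
`ζ_{w(i)} ζ_{w(i+1)}⁻¹`, and `w(n)` is its root. -/
def IsChainTree {r n : ℕ} (ζ : Fin n → ℂ) (w : Equiv.Perm (Fin n)) (T : LTree r n) : Prop :=
  (∀ (i : Fin n) (hi : (i : ℕ) + 1 < n),
      T.1.1 (w i) = w ⟨(i : ℕ) + 1, hi⟩ ∧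
      T.1.2 (w i) = ζ (w i) * (ζ (w ⟨(i : ℕ) + 1, hi⟩))⁻¹) ∧
  (∀ i : Fin n, (i : ℕ) + 1 = n → T.1.1 (w i) = w i ∧ T.1.2 (w i) = 1)

/-- The set `Z = {ζ ∈ μ_r^n | ζ_n = 1}`. -/
def Zset (r n : ℕ) : Type :=
  {ζ : Fin n → ℂ // (∀ i, ζ i ^ r = 1) ∧ ∀ i : Fin n, (i : ℕ) + 1 = n → ζ i = 1}

/-- `(ζ, w)` refines `T`: every edge `i →(η) j` of `T` satisfies `w⁻¹(i) < w⁻¹(j)`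
and `η = ζ_i ζ_j⁻¹`. -/
def RefinesL {r n : ℕ} (ζ : Fin n → ℂ) (w : Equiv.Perm (Fin n)) (T : LTree r n) : Prop :=
  ∀ i, T.1.1 i ≠ i →
    w.symm i < w.symm (T.1.1 i) ∧ T.1.2 i = ζ i * (ζ (T.1.1 i))⁻¹

/-!
If two siblings `i, j` of a tree share the parent `v`, relation (3.1) writes `[T]` as the sum of
the classes of the two trees obtained by hanging `i` below `j`, resp. `j` below `i`; the pairs
refining `T` split accordingly, by whether `w` puts `i` or `j` first. Such a regrafting strictly
enlarges the ancestor sets, so repeating it ends at trees without siblings, i.e. chains. A chain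
`T` has exactly one refining pair: the order `w` is the chain itself, and `ζ` is forced to be the
product of the labels along the path to the root, normalized at vertex `n`; and `T` is then the
chain tree `ζw.T₀`.
-/

open Function Finset

section TreeFn

variable {I : Type*} {p : I → I}

theorem exists_iterate_of_forall_exists_iterate {q : I → I} (h : ∀ x, ∃ m, q^[m] x = p x)
    {a b : I} (hab : ∃ k, p^[k] a = b) : ∃ k, q^[k] a = b := by
  obtain ⟨k, rfl⟩ := hab
  induction k with
  | zero => exact ⟨0, rfl⟩
  | succ k ih =>
    obtain ⟨m, hm⟩ := ih
    obtain ⟨m', hm'⟩ := h (p^[k] a)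
    exact ⟨m' + m, by rw [iterate_add_apply, hm, hm', iterate_succ_apply']⟩

theorem tree_induction {ρ : I} (hreach : ∀ a, ∃ k, p^[k] a = ρ) {P : I → Prop} (root : P ρ)
    (step : ∀ a, p a ≠ a → P (p a) → P a) (a : I) : P a := by
  obtain ⟨k, hk⟩ := hreach a
  induction k generalizing a with
  | zero =>
    obtain rfl : a = ρ := hk
    exact root
  | succ k ih =>
    by_cases ha : p a = a
    · obtain rfl : a = ρ := by rwa [iterate_fixed ha] at hk
      exact root
    · exact step a ha (ih (p a) (by rwa [← iterate_succ_apply]))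

namespace IsTreeFn

theorem eq_of_apply_eq_self (hp : IsTreeFn p) {a b : I} (ha : p a = a) (hb : p b = b) : a = b := by
  obtain ⟨ρ, -, hreach⟩ := hp
  obtain ⟨k, hk⟩ := hreach a
  obtain ⟨m, hm⟩ := hreach b
  rw [iterate_fixed ha] at hk
  rw [iterate_fixed hb] at hm
  rw [hk, hm]

theorem apply_eq_self_of_iterate_eq_self (hp : IsTreeFn p) {b : I} {k : ℕ} (hk : k ≠ 0)
    (h : p^[k] b = b) : p b = b := by
  obtain ⟨ρ, hρ, hreach⟩ := hp
  obtain ⟨m, hm⟩ := hreach b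
  have hmk : m ≤ k * m := Nat.le_mul_of_pos_left m (Nat.pos_of_ne_zero hk)
  have hb : b = ρ :=
    calc b = p^[k * m] b := ((IsPeriodicPt.mul_const h m).eq).symm
      _ = p^[(k * m - m) + m] b := by rw [Nat.sub_add_cancel hmk]
      _ = ρ := by rw [iterate_add_apply, hm, iterate_fixed hρ]
  rw [hb, hρ]

end IsTreeFn

structure Siblings (p : I → I) (i j : I) : Prop where
  ne : i ≠ j
  parent_eq : p i = p j
  parent_ne_left : p i ≠ i
  parent_ne_right : p j ≠ j

theorem Siblings.symm {i j : I} (hs : Siblings p i j) : Siblings p j i :=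
  ⟨hs.ne.symm, hs.parent_eq.symm, hs.parent_ne_right, hs.parent_ne_left⟩

theorem Siblings.not_exists_iterate_eq {i j : I} (hp : IsTreeFn p) (hs : Siblings p i j) :
    ¬ ∃ k, p^[k] i = j := by
  rintro ⟨_ | k, hk⟩
  · exact hs.ne hk
  · rw [iterate_succ_apply] at hk
    have hcycle : p^[k + 1] (p i) = p i := by rw [iterate_succ_apply', hk, hs.parent_eq]
    have hfix := hp.apply_eq_self_of_iterate_eq_self k.succ_ne_zero hcycle
    rw [iterate_fixed hfix] at hk
    rw [hk] at hfix
    exact hs.parent_ne_right hfix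

namespace Siblings

variable [DecidableEq I] {i j : I}

theorem exists_iterate_update (hs : Siblings p i j) {a b : I} (h : ∃ k, p^[k] a = b) :
    ∃ k, (update p i j)^[k] a = b := by
  refine exists_iterate_of_forall_exists_iterate (fun x => ?_) h
  rcases eq_or_ne x i with rfl | hx
  · exact ⟨2, by simp [update_of_ne hs.ne.symm, hs.parent_eq]⟩
  · exact ⟨1, update_of_ne hx _ _⟩

theorem isTreeFn_update (hp : IsTreeFn p) (hs : Siblings p i j) : IsTreeFn (update p i j) := by
  obtain ⟨ρ, hρ, hreach⟩ := hp
  have hiρ : i ≠ ρ := fun h => hs.parent_ne_left (h ▸ hρ)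
  exact ⟨ρ, by rw [update_of_ne hiρ.symm, hρ], fun a => hs.exists_iterate_update (hreach a)⟩

end Siblings

end TreeFn

section Ancestors

variable {I : Type*} [Fintype I] {p : I → I} {a b : I}

open Classical in
noncomputable def ancestors (p : I → I) (a : I) : Finset I := {b | ∃ k, p^[k] a = b}

theorem mem_ancestors : b ∈ ancestors p a ↔ ∃ k, p^[k] a = b := by
  simp [ancestors]

theorem self_mem_ancestors : a ∈ ancestors p a := mem_ancestors.2 ⟨0, rfl⟩

theorem ancestors_eq_insert [DecidableEq I] (p : I → I) (a : I) :
    ancestors p a = insert a (ancestors p (p a)) := by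
  ext b
  simp only [mem_insert, mem_ancestors]
  constructor
  · rintro ⟨_ | k, rfl⟩
    · exact Or.inl rfl
    · exact Or.inr ⟨k, iterate_succ_apply p k a⟩
  · rintro (rfl | ⟨k, rfl⟩)
    · exact ⟨0, rfl⟩
    · exact ⟨k + 1, iterate_succ_apply p k a⟩

theorem ancestors_of_apply_eq_self (ha : p a = a) : ancestors p a = {a} := by
  ext b
  simp [mem_ancestors, iterate_fixed ha, eq_comm]

theorem self_notMem_ancestors_apply (hp : IsTreeFn p) (ha : p a ≠ a) :
    a ∉ ancestors p (p a) := by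
  rw [mem_ancestors]
  rintro ⟨k, hk⟩
  rw [← iterate_succ_apply] at hk
  exact ha (hp.apply_eq_self_of_iterate_eq_self k.succ_ne_zero hk)

theorem card_ancestors_of_apply_ne_self (hp : IsTreeFn p) (ha : p a ≠ a) :
    #(ancestors p a) = #(ancestors p (p a)) + 1 := by
  classical
  rw [ancestors_eq_insert, card_insert_of_notMem (self_notMem_ancestors_apply hp ha)]

theorem card_ancestors_eq_one_iff (hp : IsTreeFn p) : #(ancestors p a) = 1 ↔ p a = a := by
  refine ⟨fun h => ?_, fun ha => by rw [ancestors_of_apply_eq_self ha, card_singleton]⟩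
  by_contra ha
  have : 0 < #(ancestors p (p a)) := card_pos.2 ⟨p a, self_mem_ancestors⟩
  rw [card_ancestors_of_apply_ne_self hp ha] at h
  omega

theorem Siblings.ancestors_lt_update [DecidableEq I] {i j : I} (hp : IsTreeFn p)
    (hs : Siblings p i j) : ancestors p < ancestors (update p i j) := by
  have hle : ancestors p ≤ ancestors (update p i j) := fun a b hb =>
    mem_ancestors.2 (hs.exists_iterate_update (mem_ancestors.1 hb))
  refine Pi.lt_def.2 ⟨hle, i, (ssubset_iff_of_subset (hle i)).2 ⟨j, ?_, ?_⟩⟩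
  · exact mem_ancestors.2 ⟨1, by simp⟩
  · exact fun h => hs.not_exists_iterate_eq hp (mem_ancestors.1 h)

theorem card_ancestors_injective (hp : IsTreeFn p) (hfree : ∀ i j, ¬ Siblings p i j) :
    Injective fun a => #(ancestors p a) := by
  obtain ⟨ρ, hρ, hreach⟩ := id hp
  have hone := fun a => card_ancestors_eq_one_iff (a := a) hp
  intro a
  refine tree_induction hreach (P := fun a => ∀ b, #(ancestors p a) = #(ancestors p b) → a = b)
    (fun b hb => hp.eq_of_apply_eq_self hρ ((hone b).1 (hb.symm.trans ((hone ρ).2 hρ)))) ?_ a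
  intro a ha ih b hb
  have hb' : p b ≠ b := fun hb' => ha ((hone a).1 (hb.trans ((hone b).2 hb')))
  rw [card_ancestors_of_apply_ne_self hp ha, card_ancestors_of_apply_ne_self hp hb',
    add_left_inj] at hb
  by_contra hab
  exact hfree a b ⟨hab, ih (p b) hb, ha, hb'⟩

end Ancestors

section ChainOrder

variable {n : ℕ} {p : Fin n → Fin n} {w w' : Equiv.Perm (Fin n)}

def IsChainOrder (p : Fin n → Fin n) (w : Equiv.Perm (Fin n)) : Prop :=
  (∀ (t : Fin n) (ht : (t : ℕ) + 1 < n), p (w t) = w ⟨t + 1, ht⟩) ∧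
    ∀ t : Fin n, (t : ℕ) + 1 = n → p (w t) = w t

def IsLinearExtension (p : Fin n → Fin n) (w : Equiv.Perm (Fin n)) : Prop :=
  ∀ a, p a ≠ a → w.symm a < w.symm (p a)

theorem Siblings.isLinearExtension_update_iff {i j : Fin n} (hs : Siblings p i j) :
    IsLinearExtension (update p i j) w ↔ IsLinearExtension p w ∧ w.symm i < w.symm j := by
  have hji := hs.ne.symm
  constructor
  · intro h
    have hij : w.symm i < w.symm j := by simpa using h i (by simpa using hji)
    have hj := h j (by simpa [hji] using hs.parent_ne_right)
    simp only [update_of_ne hji] at hj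
    refine ⟨fun a ha => ?_, hij⟩
    rcases eq_or_ne a i with rfl | hai
    · exact hij.trans (hs.parent_eq ▸ hj)
    · simpa [hai] using h a (by simpa [hai] using ha)
  · rintro ⟨h, hij⟩ a ha
    rcases eq_or_ne a i with rfl | hai
    · simpa using hij
    · simpa [hai] using h a (by simpa [hai] using ha)

theorem exists_isChainOrder (hp : IsTreeFn p) (hfree : ∀ i j, ¬ Siblings p i j) :
    ∃ w, IsChainOrder p w := by
  have hcard : ∀ a, 1 ≤ #(ancestors p a) ∧ #(ancestors p a) ≤ n := fun a =>
    ⟨card_pos.2 ⟨a, self_mem_ancestors⟩, by simpa using card_le_univ (ancestors p a)⟩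
  -- the root gets position `n - 1`, and a parent comes right after its child
  let e : Fin n → Fin n := fun a => ⟨n - #(ancestors p a), by have := hcard a; omega⟩
  have he : Injective e := fun a b h => card_ancestors_injective hp hfree <| by
    show #(ancestors p a) = #(ancestors p b)
    have := hcard a; have := hcard b; simp only [e, Fin.mk.injEq] at h; omega
  let E := Equiv.ofBijective e he.bijective_of_finite
  have hE : ∀ t, n - #(ancestors p (E.symm t)) = t := fun t =>
    congrArg Fin.val (E.apply_symm_apply t)
  refine ⟨E.symm, fun t ht => ?_, fun t ht => ?_⟩
  · have hne : p (E.symm t) ≠ E.symm t := fun h => by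
      have := hE t; rw [(card_ancestors_eq_one_iff hp).2 h] at this; omega
    have hsucc := card_ancestors_of_apply_ne_self hp hne
    rw [Equiv.eq_symm_apply]
    ext
    show n - #(ancestors p (p (E.symm t))) = t + 1
    have := hE t; have := hcard (E.symm t)
    omega
  · have := hE t; have := hcard (E.symm t)
    exact (card_ancestors_eq_one_iff hp).1 (by omega)

theorem IsChainOrder.isLinearExtension (hw : IsChainOrder p w) : IsLinearExtension p w := by
  intro a ha
  obtain ⟨t, rfl⟩ := w.surjective a
  rcases (Nat.succ_le_of_lt t.isLt).lt_or_eq with ht | ht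
  · rw [hw.1 t ht, Equiv.symm_apply_apply, Equiv.symm_apply_apply]
    exact Fin.lt_def.2 (Nat.lt_succ_self t)
  · exact absurd (hw.2 t ht) ha

theorem IsChainOrder.eq_of_isLinearExtension (hw : IsChainOrder p w)
    (h : IsLinearExtension p w') : w' = w := by
  suffices hmono : StrictMono (w'.symm ∘ w) from
    Equiv.ext fun t => (w'.symm_apply_eq.1 (congrFun hmono.eq_id t)).symm
  cases n with
  | zero => exact fun t => t.elim0
  | succ m =>
    refine Fin.strictMono_iff_lt_succ.2 fun t => ?_
    have hstep : p (w t.castSucc) = w t.succ := hw.1 t.castSucc (by simp)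
    have hne : p (w t.castSucc) ≠ w t.castSucc := by
      rw [hstep]; exact w.injective.ne Fin.castSucc_lt_succ.ne'
    simpa [hstep] using h _ hne

end ChainOrder

section Potential

variable {I K : Type*} [Field K] {p : I → I} {ℓ ζ : I → K}

def IsPotential (p : I → I) (ℓ ζ : I → K) : Prop :=
  ∀ a, p a ≠ a → ℓ a = ζ a * (ζ (p a))⁻¹

theorem Siblings.isPotential_update_iff [DecidableEq I] {i j : I} (hs : Siblings p i j)
    (hζ : ∀ a, ζ a ≠ 0) :
    IsPotential (update p i j) (update ℓ i (ℓ i * (ℓ j)⁻¹)) ζ ↔ IsPotential p ℓ ζ := by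
  have hji := hs.ne.symm
  have hi : ℓ j = ζ j * (ζ (p j))⁻¹ →
      (ℓ i * (ℓ j)⁻¹ = ζ i * (ζ j)⁻¹ ↔ ℓ i = ζ i * (ζ (p i))⁻¹) := by
    intro hj
    rw [hs.parent_eq, hj]
    have := hζ j
    have := hζ (p j)
    constructor <;> intro h <;> field_simp at h ⊢ <;> linear_combination h
  constructor
  · intro h a ha
    have hj := h j (by simpa [hji] using hs.parent_ne_right)
    simp only [update_of_ne hji] at hj
    rcases eq_or_ne a i with rfl | hai
    · exact (hi hj).1 (by simpa using h a (by simpa using hji))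
    · simpa [hai] using h a (by simpa [hai] using ha)
  · intro h a ha
    rcases eq_or_ne a i with rfl | hai
    · simpa using (hi (h j hs.parent_ne_right)).2 (h a hs.parent_ne_left)
    · simpa [hai] using h a (by simpa [hai] using ha)

variable [Fintype I]

noncomputable def pathProd (p : I → I) (ℓ : I → K) (a : I) : K := ∏ b ∈ ancestors p a, ℓ b

theorem pathProd_of_apply_eq_self {a : I} (ha : p a = a) : pathProd p ℓ a = ℓ a := by
  simp [pathProd, ancestors_of_apply_eq_self ha]

theorem pathProd_of_apply_ne_self (hp : IsTreeFn p) {a : I} (ha : p a ≠ a) :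
    pathProd p ℓ a = ℓ a * pathProd p ℓ (p a) := by
  classical
  rw [pathProd, ancestors_eq_insert, prod_insert (self_notMem_ancestors_apply hp ha), pathProd]

theorem isPotential_pathProd_mul (hp : IsTreeFn p) (hℓ : ∀ a, ℓ a ≠ 0) {c : K} (hc : c ≠ 0) :
    IsPotential p ℓ fun a => pathProd p ℓ a * c := by
  intro a ha
  have : pathProd p ℓ (p a) ≠ 0 := prod_ne_zero_iff.2 fun b _ => hℓ b
  beta_reduce
  rw [pathProd_of_apply_ne_self hp ha]
  field_simp

theorem IsPotential.eq_pathProd_mul {ρ : I} (hρ : p ρ = ρ) (hreach : ∀ a, ∃ k, p^[k] a = ρ)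
    (hℓρ : ℓ ρ = 1) (hζ : ∀ a, ζ a ≠ 0) (h : IsPotential p ℓ ζ) (a : I) :
    ζ a = pathProd p ℓ a * ζ ρ := by
  refine tree_induction (P := fun a => ζ a = pathProd p ℓ a * ζ ρ) hreach
    (by rw [pathProd_of_apply_eq_self hρ, hℓρ, one_mul])
    (fun a ha ih => ?_) a
  rw [pathProd_of_apply_ne_self ⟨ρ, hρ, hreach⟩ ha, mul_assoc, ← ih, h a ha,
    inv_mul_cancel_right₀ (hζ (p a))]

end Potential

namespace LTree

variable {r n : ℕ}

theorem label_ne_zero (hr : 0 < r) (T : LTree r n) (a : Fin n) : T.1.2 a ≠ 0 :=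
  (IsUnit.of_pow_eq_one (T.2.2.1 a) hr.ne').ne_zero

theorem _root_.Zset.val_ne_zero (hr : 0 < r) (ζ : Zset r n) (a : Fin n) : ζ.1 a ≠ 0 :=
  (IsUnit.of_pow_eq_one (ζ.2.1 a) hr.ne').ne_zero

theorem refinesL_iff {ζ : Fin n → ℂ} {w : Equiv.Perm (Fin n)} {T : LTree r n} :
    RefinesL ζ w T ↔ IsLinearExtension T.1.1 w ∧ IsPotential T.1.1 T.1.2 ζ := by
  simp only [RefinesL, IsLinearExtension, IsPotential, imp_and, forall_and]

theorem existsUnique_potential (hr : 0 < r) (T : LTree r n) :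
    ∃! ζ : Zset r n, IsPotential T.1.1 T.1.2 ζ.1 := by
  obtain ⟨ρ, hρ, hreach⟩ := T.2.1
  have hn : n - 1 < n := by have := ρ.isLt; omega
  set P := pathProd T.1.1 T.1.2
  have hP : ∀ a, P a ^ r = 1 := fun a => by
    simp only [P, pathProd, ← prod_pow, T.2.2.1, prod_const_one]
  have hP0 : ∀ a, P a ≠ 0 := fun a => (IsUnit.of_pow_eq_one (hP a) hr.ne').ne_zero
  have hlast : ∀ i : Fin n, (i : ℕ) + 1 = n → i = ⟨n - 1, hn⟩ := fun i hi => by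
    ext; simp only; omega
  refine ⟨⟨fun a => P a * (P ⟨n - 1, hn⟩)⁻¹, fun a => ?_, fun i hi => ?_⟩,
    isPotential_pathProd_mul T.2.1 (label_ne_zero hr T) (inv_ne_zero (hP0 _)), fun ζ hζ => ?_⟩
  · rw [mul_pow, inv_pow, hP, hP, inv_one, mul_one]
  · rw [hlast i hi]
    exact mul_inv_cancel₀ (hP0 _)
  · have hform := hζ.eq_pathProd_mul hρ hreach (T.2.2.2 ρ hρ) (ζ.val_ne_zero hr)
    have hρval : ζ.1 ρ = (P ⟨n - 1, hn⟩)⁻¹ :=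
      eq_inv_of_mul_eq_one_right ((hform _).symm.trans (ζ.2.2 _ (by simp only; omega)))
    exact Subtype.ext (funext fun a => by rw [hform, hρval])

noncomputable def regraft (T : LTree r n) {i j : Fin n} (hs : Siblings T.1.1 i j) : LTree r n :=
  ⟨(update T.1.1 i j, update T.1.2 i (T.1.2 i * (T.1.2 j)⁻¹)), hs.isTreeFn_update T.2.1,
    fun a => by
      rcases eq_or_ne a i with rfl | hai
      · simp [mul_pow, T.2.2.1]
      · simp [hai, T.2.2.1],
    fun a ha => by
      have hai : a ≠ i := by rintro rfl; simp [hs.ne.symm] at ha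
      simp only [update_of_ne hai] at ha ⊢
      exact T.2.2.2 a ha⟩

theorem tripleRelL_regraft (T : LTree r n) {i j : Fin n} (hs : Siblings T.1.1 i j) :
    TripleRelL (T.regraft hs) (T.regraft hs.symm) T := by
  refine ⟨i, j, T.1.1 i, T.1.2 i, T.1.2 j, hs.ne,
    fun h => hs.parent_ne_right (hs.parent_eq.symm.trans h.symm),
    fun h => hs.parent_ne_left h.symm, ?_⟩
  simp +contextual [regraft, hs.ne, hs.ne.symm, hs.parent_eq]

theorem refinesL_regraft_iff (T : LTree r n) {i j : Fin n}
    (hs : Siblings T.1.1 i j) {ζ : Fin n → ℂ} (hζ : ∀ a, ζ a ≠ 0) (w : Equiv.Perm (Fin n)) :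
    RefinesL ζ w (T.regraft hs) ↔ RefinesL ζ w T ∧ w.symm i < w.symm j := by
  rw [refinesL_iff, refinesL_iff, and_right_comm]
  exact and_congr hs.isLinearExtension_update_iff (hs.isPotential_update_iff hζ)

end LTree

section ChainTree

variable {r n : ℕ} {T T' : LTree r n} {w : Equiv.Perm (Fin n)}

theorem IsChainOrder.isChainTree {ζ : Fin n → ℂ} (hw : IsChainOrder T.1.1 w)
    (hζ : IsPotential T.1.1 T.1.2 ζ) : IsChainTree ζ w T := by
  refine ⟨fun t ht => ⟨hw.1 t ht, ?_⟩, fun t ht => ⟨hw.2 t ht, T.2.2.2 _ (hw.2 t ht)⟩⟩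
  have hne : T.1.1 (w t) ≠ w t := by
    rw [hw.1 t ht]
    exact w.injective.ne (Fin.ne_of_val_ne (by simp))
  rw [hζ _ hne, hw.1 t ht]

theorem IsChainTree.unique {ζ : Fin n → ℂ} (h : IsChainTree ζ w T) (h' : IsChainTree ζ w T') :
    T = T' := by
  have hw : ∀ t, T.1.1 (w t) = T'.1.1 (w t) ∧ T.1.2 (w t) = T'.1.2 (w t) := fun t => by
    rcases (Nat.succ_le_of_lt t.isLt).lt_or_eq with ht | ht
    · rw [(h.1 t ht).1, (h'.1 t ht).1, (h.1 t ht).2, (h'.1 t ht).2]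
      exact ⟨rfl, rfl⟩
    · rw [(h.2 t ht).1, (h'.2 t ht).1, (h.2 t ht).2, (h'.2 t ht).2]
      exact ⟨rfl, rfl⟩
  refine Subtype.ext (Prod.ext (funext fun a => ?_) (funext fun a => ?_)) <;>
    obtain ⟨t, rfl⟩ := w.surjective a
  exacts [(hw t).1, (hw t).2]

theorem LTree.exists_refinesL_iff_of_forall_not_siblings (hr : 0 < r) (T : LTree r n)
    (hfree : ∀ i j, ¬ Siblings T.1.1 i j) :
    ∃ x : Zset r n × Equiv.Perm (Fin n), IsChainTree x.1.1 x.2 T ∧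
      ∀ y : Zset r n × Equiv.Perm (Fin n), RefinesL y.1.1 y.2 T ↔ y = x := by
  obtain ⟨w, hw⟩ := exists_isChainOrder T.2.1 hfree
  obtain ⟨ζ, hζ, huniq⟩ := T.existsUnique_potential hr
  refine ⟨(ζ, w), hw.isChainTree hζ, fun y => ?_⟩
  rw [LTree.refinesL_iff, Prod.ext_iff]
  exact ⟨fun h => ⟨huniq _ h.2, hw.eq_of_isLinearExtension h.1⟩,
    fun h => ⟨h.2 ▸ hw.isLinearExtension, h.1 ▸ hζ⟩⟩

end ChainTree

theorem mk_eq_add_of_tripleRelL {r n : ℕ} {T₁ T₂ T₃ : LTree r n} (h : TripleRelL T₁ T₂ T₃) :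
    (Submodule.Quotient.mk (Finsupp.single T₃ (1 : ℂ)) : VL r n) =
      Submodule.Quotient.mk (Finsupp.single T₁ 1) +
        Submodule.Quotient.mk (Finsupp.single T₂ 1) := by
  rw [← Submodule.Quotient.mk_add, Submodule.Quotient.eq, ← neg_sub]
  exact neg_mem (Submodule.subset_span (Or.inl ⟨T₁, T₂, T₃, h, rfl⟩))

theorem stmt14_general (r n : ℕ) (hr : 0 < r)
    (c : Zset r n → Equiv.Perm (Fin n) → LTree r n)
    (hc : ∀ ζ w, IsChainTree ζ.1 w (c ζ w))
    (T : LTree r n)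
    (S : Finset (Zset r n × Equiv.Perm (Fin n)))
    (hS : ∀ x : Zset r n × Equiv.Perm (Fin n), x ∈ S ↔ RefinesL x.1.1 x.2 T) :
    (Submodule.Quotient.mk (Finsupp.single T (1 : ℂ)) : VL r n)
      = ∑ x ∈ S, Submodule.Quotient.mk (Finsupp.single (c x.1 x.2) (1 : ℂ)) := by
  classical
  induction T using (wellFounded_gt.onFun (f := fun T : LTree r n => ancestors T.1.1)).induction
    generalizing S with
  | _ T ih =>
    by_cases hfork : ∃ i j, Siblings T.1.1 i j
    · obtain ⟨i, j, hs⟩ := hfork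
      rw [mk_eq_add_of_tripleRelL (T.tripleRelL_regraft hs),
        ← sum_filter_add_sum_filter_not S fun x => x.2.symm i < x.2.symm j]
      congr 1
      · refine ih _ (hs.ancestors_lt_update T.2.1) _ fun x => ?_
        rw [mem_filter, hS, T.refinesL_regraft_iff hs (x.1.val_ne_zero hr)]
      · refine ih _ (hs.symm.ancestors_lt_update T.2.1) _ fun x => ?_
        rw [mem_filter, hS, T.refinesL_regraft_iff hs.symm (x.1.val_ne_zero hr), not_lt,
          (x.2.symm.injective.ne hs.ne.symm).le_iff_lt]
    · obtain ⟨x, hx, hrefines⟩ :=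
        T.exists_refinesL_iff_of_forall_not_siblings hr (by simpa using hfork)
      rw [show S = {x} from Finset.ext fun y => by rw [hS, hrefines, mem_singleton],
        sum_singleton, hx.unique (hc _ _)]

/-- In `𝒱(r,n)`, every class `[T]` equals `∑ [ζw.T₀]`, summed over the pairs
`(ζ, w) ∈ Z × S_n` refining `T`.  Here `c ζ w` denotes the chain tree `ζw.T₀`, and `S` is
the (finite) set of refining pairs. -/
theorem stmt14 (r n : ℕ) (hr : 0 < r) (hn : 0 < n)
    (c : Zset r n → Equiv.Perm (Fin n) → LTree r n)
    (hc : ∀ ζ w, IsChainTree ζ.1 w (c ζ w))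
    (T : LTree r n)
    (S : Finset (Zset r n × Equiv.Perm (Fin n)))
    (hS : ∀ x : Zset r n × Equiv.Perm (Fin n), x ∈ S ↔ RefinesL x.1.1 x.2 T) :
    (Submodule.Quotient.mk (Finsupp.single T (1 : ℂ)) : VL r n)
      = ∑ x ∈ S, Submodule.Quotient.mk (Finsupp.single (c x.1 x.2) (1 : ℂ)) :=
  stmt14_general r n hr c hc T S hS
end

section
/- Let $w_0 \in S_n$ be the permutation $i \mapsto n+1-i$ and let $T_0$ be the chain $1\to 2\to\cdots\to n$. Then in $\mathcal{V}(1,n)$, $w_0.[T_0] = (-1)^{n-1}[T_0]$. -/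
/-- The set `𝒯(1,n)` of directed trees on `{1,…,n}`. -/
def Tree1 (n : ℕ) : Type := {p : Fin n → Fin n // IsTreeFn p}

/-- `T₁, T₂, T₃` are identical except for the edges among the distinct vertices `i, j, k`,
where `T₁` has `i→j→k`, `T₂` has `j→i→k`, and `T₃` has `i→k` and `j→k`. -/
def TripleRel {n : ℕ} (p1 p2 p3 : Fin n → Fin n) : Prop :=
  ∃ i j k : Fin n, i ≠ j ∧ j ≠ k ∧ i ≠ k ∧
    p1 i = j ∧ p1 j = k ∧ p2 j = i ∧ p2 i = k ∧ p3 i = k ∧ p3 j = k ∧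
    ∀ a, a ≠ i → a ≠ j → p1 a = p2 a ∧ p2 a = p3 a

/-- `T'` is obtained from `T` by reversing the edge `i → j` incident to the root `j`
(so that `i` becomes the root of `T'`). -/
def PairRel {n : ℕ} (p p' : Fin n → Fin n) : Prop :=
  ∃ i j : Fin n, i ≠ j ∧ p i = j ∧ p j = j ∧ p' j = i ∧ p' i = i ∧
    ∀ a, a ≠ i → a ≠ j → p a = p' a

/-- The defining relations of `𝒱(1,n)`, as elements of the free vector space `ℂ𝒯(1,n)`:
`[T₁] + [T₂] - [T₃]` for admissible triples, and `[T] + [T']` for admissible pairs. -/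
def relSet (n : ℕ) : Set (Tree1 n →₀ ℂ) :=
  {x | ∃ T1 T2 T3 : Tree1 n, TripleRel T1.1 T2.1 T3.1 ∧
        x = Finsupp.single T1 1 + Finsupp.single T2 1 - Finsupp.single T3 1} ∪
  {x | ∃ T T' : Tree1 n, PairRel T.1 T'.1 ∧
        x = Finsupp.single T 1 + Finsupp.single T' 1}

/-- The space `𝒱(1,n)`: the free vector space on `𝒯(1,n)` modulo the relations. -/
def V1 (n : ℕ) : Type := (Tree1 n →₀ ℂ) ⧸ Submodule.span ℂ (relSet n)

noncomputable instance (n : ℕ) : AddCommGroup (V1 n) :=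
  Submodule.Quotient.addCommGroup _

noncomputable instance (n : ℕ) : Module ℂ (V1 n) := Submodule.Quotient.module _

/-! ### Auxiliary constructions

For `m < n`, `pfun n m` is the tree whose edges are `i → i+1` for `i < m` and
`i → i-1` for `i > m`, with root `m`: two chains merging at the root `m`.
For `m = n-1` this is the chain `t0`, for `m = 0` the reversed chain `t1`.
Reversing the root edge `(m-1) → m` of `pfun n m` yields exactly `pfun n (m-1)`,
so consecutive such trees are related by the pair relation. -/

def pfun (n m : ℕ) (hm : m < n) : Fin n → Fin n := fun i =>
  if h : (i : ℕ) < m then ⟨(i : ℕ) + 1, Nat.lt_of_le_of_lt h hm⟩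
  else if (m : ℕ) < (i : ℕ) then ⟨(i : ℕ) - 1, Nat.lt_of_le_of_lt (Nat.sub_le _ _) i.isLt⟩
  else i

lemma pfun_lt {n m : ℕ} (hm : m < n) (i : Fin n) (h : (i:ℕ) < m) :
    pfun n m hm i = ⟨(i:ℕ)+1, Nat.lt_of_le_of_lt h hm⟩ := dif_pos h

lemma pfun_gt {n m : ℕ} (hm : m < n) (i : Fin n) (h : m < (i:ℕ)) :
    pfun n m hm i = ⟨(i:ℕ)-1, Nat.lt_of_le_of_lt (Nat.sub_le _ _) i.isLt⟩ := by
  unfold pfun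
  rw [dif_neg (by omega), if_pos h]

lemma pfun_eq {n m : ℕ} (hm : m < n) (i : Fin n) (h : (i:ℕ) = m) :
    pfun n m hm i = i := by
  unfold pfun
  rw [dif_neg (by omega), if_neg (by omega)]

lemma pfun_tree (n m : ℕ) (hm : m < n) : IsTreeFn (pfun n m hm) := by
  refine ⟨⟨m, hm⟩, pfun_eq hm _ rfl, ?_⟩
  suffices H : ∀ D : ℕ, ∀ i : Fin n, (m - (i:ℕ)) + ((i:ℕ) - m) ≤ D →
      ∃ k, (pfun n m hm)^[k] i = ⟨m, hm⟩ from fun i => H _ i le_rfl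
  intro D
  induction D with
  | zero =>
      intro i hi
      exact ⟨0, Fin.ext (show (i:ℕ) = m by omega)⟩
  | succ D ih =>
      intro i hi
      rcases lt_trichotomy ((i:ℕ)) m with h | h | h
      · obtain ⟨k, hk⟩ := ih ⟨(i:ℕ)+1, Nat.lt_of_le_of_lt h hm⟩ (by simp; omega)
        exact ⟨k+1, by rw [Function.iterate_succ_apply, pfun_lt hm i h]; exact hk⟩
      · exact ⟨0, Fin.ext (show (i:ℕ) = m from h)⟩
      · obtain ⟨k, hk⟩ := ih ⟨(i:ℕ)-1, Nat.lt_of_le_of_lt (Nat.sub_le _ _) i.isLt⟩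
          (by simp; omega)
        exact ⟨k+1, by rw [Function.iterate_succ_apply, pfun_gt hm i h]; exact hk⟩

def chainT (n m : ℕ) (hm : m < n) : Tree1 n := ⟨pfun n m hm, pfun_tree n m hm⟩

lemma pfun_pair (n m : ℕ) (hm0 : 0 < m) (hm : m < n) (hm' : m - 1 < n) :
    PairRel (pfun n m hm) (pfun n (m-1) hm') := by
  refine ⟨⟨m-1, hm'⟩, ⟨m, hm⟩, by simp [Fin.ext_iff]; omega, ?_, ?_, ?_, ?_, ?_⟩
  · rw [pfun_lt hm _ (by simp; omega)]; exact Fin.ext (by simp; omega)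
  · exact pfun_eq hm _ rfl
  · rw [pfun_gt hm' _ (by simp; omega)]
  · exact pfun_eq hm' _ rfl
  · intro a ha1 ha2
    have h1 : (a:ℕ) ≠ m - 1 := fun h => ha1 (Fin.ext h)
    have h2 : (a:ℕ) ≠ m := fun h => ha2 (Fin.ext h)
    rcases lt_or_gt_of_ne h2 with h | h
    · have h3 : (a:ℕ) < m - 1 := by omega
      rw [pfun_lt hm a h, pfun_lt hm' a h3]
    · rw [pfun_gt hm a h, pfun_gt hm' a (by omega)]

lemma pair_mk {n : ℕ} (T T' : Tree1 n) (h : PairRel T.1 T'.1) :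
    (Submodule.Quotient.mk (Finsupp.single T' (1:ℂ)) : V1 n)
      = - Submodule.Quotient.mk (Finsupp.single T (1:ℂ)) := by
  have hmem : Finsupp.single T (1:ℂ) + Finsupp.single T' 1 ∈ Submodule.span ℂ (relSet n) :=
    Submodule.subset_span (Or.inr ⟨T, T', h, rfl⟩)
  have h0 : (Submodule.Quotient.mk (Finsupp.single T (1:ℂ) + Finsupp.single T' 1) : V1 n) = 0 :=
    (Submodule.Quotient.mk_eq_zero _).2 hmem
  rw [Submodule.Quotient.mk_add, add_comm] at h0
  exact add_eq_zero_iff_eq_neg.1 h0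

lemma chain_pow (n : ℕ) (hn : 0 < n) :
    ∀ m : ℕ, ∀ hm : m < n,
      (Submodule.Quotient.mk (Finsupp.single (chainT n 0 hn) (1:ℂ)) : V1 n)
        = (-1:ℂ)^m • Submodule.Quotient.mk (Finsupp.single (chainT n m hm) (1:ℂ)) := by
  intro m
  induction m with
  | zero => intro hm; simp
  | succ m ih =>
      intro hm
      have hm' : m < n := by omega
      have hp := pair_mk (chainT n (m+1) hm) (chainT n m hm')
        (pfun_pair n (m+1) (Nat.succ_pos m) hm hm')
      rw [ih hm', hp, pow_succ, mul_smul, smul_neg, neg_one_smul, smul_neg]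

/-- Let `w₀ ∈ S_n` be `i ↦ n+1-i` and `T₀` the chain `1 → 2 → ⋯ → n`.  Then in `𝒱(1,n)`,
`w₀.[T₀] = (-1)^(n-1) [T₀]`.  Here `t0` is the chain `T₀` (vertex `i` points to `i+1`,
root `n`) and `t1 = w₀.T₀` is the reversed chain `n → n-1 → ⋯ → 1` (vertex `i` points to
`i-1`, root `1`). -/
theorem stmt16 (n : ℕ) (hn : 0 < n) (t0 t1 : Tree1 n)
    (ht0 : (∀ (i : Fin n) (hi : (i : ℕ) + 1 < n), t0.1 i = ⟨(i : ℕ) + 1, hi⟩) ∧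
      ∀ i : Fin n, (i : ℕ) + 1 = n → t0.1 i = i)
    (ht1 : (∀ i : Fin n, 0 < (i : ℕ) →
        t1.1 i = ⟨(i : ℕ) - 1, Nat.lt_of_le_of_lt (Nat.sub_le _ _) i.isLt⟩) ∧
      ∀ i : Fin n, (i : ℕ) = 0 → t1.1 i = i) :
    (Submodule.Quotient.mk (Finsupp.single t1 (1 : ℂ)) : V1 n)
      = ((-1 : ℂ)) ^ (n - 1) • Submodule.Quotient.mk (Finsupp.single t0 (1 : ℂ)) := by
  have hnn : n - 1 < n := by omega
  have e1 : t1 = chainT n 0 hn := by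
    apply Subtype.ext; funext i
    show t1.1 i = pfun n 0 hn i
    rcases Nat.eq_zero_or_pos ((i:ℕ)) with h | h
    · rw [ht1.2 i h, pfun_eq hn i h]
    · rw [ht1.1 i h, pfun_gt hn i h]
  have e0 : t0 = chainT n (n-1) hnn := by
    apply Subtype.ext; funext i
    show t0.1 i = pfun n (n-1) hnn i
    rcases lt_or_eq_of_le (Nat.le_of_lt_succ (by omega : (i:ℕ) < (n-1)+1)) with h | h
    · rw [ht0.1 i (by omega), pfun_lt hnn i h]
    · rw [ht0.2 i (by omega), pfun_eq hnn i h]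
  rw [e0, e1]
  exact chain_pow n hn (n-1) hnn
end
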